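/- arXiv:1708.05949 — 7 statements merged into one kernel-verified Lean document; each statement's English description precedes it below -/
import Mathlib

section
/- Let n ≥ 3 and let V_1, …, V_n be points of ℝ² in strictly convex, positively oriented (anticlockwise) position, i.e., with indices read modulo n, for every i and every k ∉ {i−1, i} one has det(V_i − V_{i−1}, V_k − V_i) > 0. For each i let θ_i ∈ [0, π) be the unique angle such that the edge vector V_i − V_{i−1} is parallel to (cos θ_i, sin θ_i), and assume the θ_i are pairwise distinct and that θ_1 = min{θ_1, …, θ_n}. Then there exists j with 1 ≤ j ≤ n−1 such that θ_1 < θ_2 < ⋯ < θ_j, θ_{j+1} < θ_{j+2} < ⋯ < θ_n, and θ_{j+1} < θ_j. (This is the paper's Theorem: if a line arrangement gives rise to an n-gonality L_1 → L_2 → ⋯ → L_n → L_1 in anticlockwise order, then the cycle at infinity has a 2-standard consecutive structure respecting the slope property.) -/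
/-!
Write each edge as `V i - V (i - 1) = r i • (cos θ i, sin θ i)`. Convexity at two consecutive
edges says `r (i - 1) * r i * sin (θ i - θ (i - 1)) > 0`, so the sign of `r` changes exactly at
the descents of `θ`. The cyclic step from `θ (n - 1)` back to the minimum `θ 0` is a descent,
so the signs of `r 0` and `r (n - 1)` differ and `θ` has a descent among `1, …, n - 1`.
Once `r` has changed sign relative to `r 0` it cannot change back: a descent
`θ 0 < θ t < θ (t - 1)` at which it would do so makes the direction of edge `t` a positive
combination of the directions of edges `0` and `t - 1`, and then the convexity inequalities of
these three edges against the chord `V (t - 1) - V 0` have incompatible signs.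
Hence the descent is unique.
-/

namespace Gonality

open Real Set

def cross (a b : ℝ × ℝ) : ℝ := a.1 * b.2 - a.2 * b.1

noncomputable def dir (α : ℝ) : ℝ × ℝ := (cos α, sin α)

lemma cross_add_left (a b c : ℝ × ℝ) : cross (a + b) c = cross a c + cross b c := by
  simp only [cross, Prod.fst_add, Prod.snd_add]; ring

lemma cross_add_right (a b c : ℝ × ℝ) : cross a (b + c) = cross a b + cross a c := by
  simp only [cross, Prod.fst_add, Prod.snd_add]; ring

lemma cross_smul_left (s : ℝ) (a b : ℝ × ℝ) : cross (s • a) b = s * cross a b := by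
  simp only [cross, Prod.smul_fst, Prod.smul_snd, smul_eq_mul]; ring

lemma cross_smul_right (s : ℝ) (a b : ℝ × ℝ) : cross a (s • b) = s * cross a b := by
  simp only [cross, Prod.smul_fst, Prod.smul_snd, smul_eq_mul]; ring

lemma cross_neg_right (a b : ℝ × ℝ) : cross a (-b) = -cross a b := by
  simp only [cross, Prod.fst_neg, Prod.snd_neg]; ring

lemma cross_self (a : ℝ × ℝ) : cross a a = 0 := by
  simp only [cross]; ring

lemma cross_dir_dir (α β : ℝ) : cross (dir α) (dir β) = sin (β - α) := by
  simp only [cross, dir, sin_sub]; ring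

lemma sin_sub_smul_dir (α β γ : ℝ) :
    sin (γ - α) • dir β = sin (γ - β) • dir α + sin (β - α) • dir γ := by
  ext <;> simp only [dir, sin_sub, Prod.smul_fst, Prod.smul_snd, Prod.fst_add, Prod.snd_add,
    smul_eq_mul] <;> ring

lemma sin_sub_pos_iff {α β : ℝ} (hα : α ∈ Ico 0 π) (hβ : β ∈ Ico 0 π) :
    0 < sin (β - α) ↔ α < β := by
  refine ⟨fun h => ?_, fun h => sin_pos_of_pos_of_lt_pi (by linarith) (by linarith [hβ.2, hα.1])⟩
  by_contra! hle
  exact h.not_ge (sin_nonpos_of_nonpos_of_neg_pi_le (by linarith) (by linarith [hα.2, hβ.1]))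

lemma mul_pos_iff_mul_neg_iff {a b c : ℝ} (ha : a ≠ 0) (hb : b ≠ 0) (hc : c ≠ 0) :
    0 < b * c ↔ (a * b < 0 ↔ a * c < 0) := by
  rcases ha.lt_or_gt with ha | ha <;> rcases hb.lt_or_gt with hb | hb <;>
    rcases hc.lt_or_gt with hc | hc <;> simp [mul_pos_iff, mul_neg_iff, *, not_lt_of_gt]

lemma mul_neg_of_dir_between {α β γ r₀ r₁ r₂ : ℝ} {D : ℝ × ℝ} (hα : 0 ≤ α) (hαβ : α < β)
    (hβγ : β < γ) (hγ : γ < π) (h₀ : 0 < r₀ * cross (dir α) D) (h₁ : r₁ * cross (dir β) D < 0)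
    (h₂ : r₂ * cross (dir γ) D < 0) (h₀₂ : r₀ * r₂ < 0) : r₀ * r₁ < 0 := by
  have key := congrArg (cross · D) (sin_sub_smul_dir α β γ)
  simp only [cross_add_left, cross_smul_left] at key
  have hγα : 0 < sin (γ - α) := sin_pos_of_pos_of_lt_pi (by linarith) (by linarith)
  have hγβ : 0 < sin (γ - β) := sin_pos_of_pos_of_lt_pi (by linarith) (by linarith)
  have hβα : 0 < sin (β - α) := sin_pos_of_pos_of_lt_pi (by linarith) (by linarith)
  have hz : 0 < r₀ * cross (dir γ) D := by nlinarith [mul_pos_of_neg_of_neg h₀₂ h₂, sq_nonneg r₂]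
  have hy : 0 < r₀ * cross (dir β) D := by
    have hcomb : sin (γ - α) * (r₀ * cross (dir β) D)
        = sin (γ - β) * (r₀ * cross (dir α) D) + sin (β - α) * (r₀ * cross (dir γ) D) := by
      linear_combination r₀ * key
    refine pos_of_mul_pos_right (a := sin (γ - α)) ?_ hγα.le
    rw [hcomb]
    exact add_pos (mul_pos hγβ h₀) (mul_pos hβα hz)
  nlinarith [mul_neg_of_pos_of_neg hy h₁, sq_nonneg (cross (dir β) D)]

theorem exists_two_strictMonoOn_runs {α : Type*} [Preorder α] {N : ℕ} {θ : ℕ → α}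
    (F : ℕ → Prop) (h0 : ¬F 0) (hN : F N) (hstay : ∀ k < N, F k → F (k + 1))
    (hasc : ∀ k < N, θ k < θ (k + 1) ↔ (F k ↔ F (k + 1))) :
    ∃ j < N, StrictMonoOn θ (Iic j) ∧ StrictMonoOn θ (Icc (j + 1) N) ∧ ¬θ j < θ (j + 1) := by
  classical
  obtain ⟨M, rfl⟩ : ∃ M, N = M + 1 := Nat.exists_eq_succ_of_ne_zero (by rintro rfl; exact h0 hN)
  have hex : ∃ j, F (j + 1) := ⟨M, hN⟩
  set j := Nat.find hex
  have hjN : j < M + 1 := Nat.lt_succ_of_le (Nat.find_min' hex hN)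
  have before : ∀ k ≤ j, ¬F k := by
    rintro (_ | k) hk
    · exact h0
    · exact Nat.find_min hex (by omega)
  have after : ∀ k, j + 1 ≤ k → k ≤ M + 1 → F k := by
    intro k hk hkN
    induction k, hk using Nat.le_induction with
    | base => exact Nat.find_spec hex
    | succ k hk ih => exact hstay k (by omega) (ih (by omega))
  refine ⟨j, hjN, ?_, ?_, ?_⟩
  · refine strictMonoOn_of_lt_add_one ordConnected_Iic fun k _ hk hk1 => ?_
    exact (hasc k (by have := mem_Iic.1 hk1; omega)).2
      (iff_of_false (before k hk) (before _ hk1))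
  · refine strictMonoOn_of_lt_add_one ordConnected_Icc fun k _ hk hk1 => ?_
    exact (hasc k (by have := hk1.2; omega)).2
      (iff_of_true (after k hk.1 hk.2) (after _ hk1.1 hk1.2))
  · rw [hasc j hjN]
    exact fun h => before j le_rfl (h.2 (Nat.find_spec hex))

section Polygon

variable {n : ℕ} [NeZero n]

lemma sub_one_ne_self (hn : 2 ≤ n) (i : Fin n) : i - 1 ≠ i := by
  rw [Ne, sub_eq_self, Fin.ext_iff]
  simp only [Fin.coe_ofNat_eq_mod, Nat.zero_mod, Nat.one_mod_eq_zero_iff]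
  omega

lemma sub_one_sub_one_ne_self (hn : 3 ≤ n) (i : Fin n) : i - 1 - 1 ≠ i := by
  rw [sub_sub, Ne, sub_eq_self, Fin.ext_iff]
  simp [Fin.val_add, Nat.mod_eq_of_lt (show 2 < n by omega)]

def IsConvexCCW (V : Fin n → ℝ × ℝ) : Prop :=
  ∀ i k : Fin n, k ≠ i - 1 → k ≠ i → 0 < cross (V i - V (i - 1)) (V k - V i)

variable {V : Fin n → ℝ × ℝ} {θ r : Fin n → ℝ}

lemma edge_mul_pos_iff (hn : 3 ≤ n) (hV : IsConvexCCW V)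
    (hedge : ∀ i, V i - V (i - 1) = r i • dir (θ i)) (hθ : ∀ i, θ i ∈ Ico 0 π) (i : Fin n) :
    0 < r (i - 1) * r i ↔ θ (i - 1) < θ i := by
  have h := hV (i - 1) i (sub_one_sub_one_ne_self hn i).symm (sub_one_ne_self (by omega) i).symm
  rw [hedge, hedge, cross_smul_left, cross_smul_right, cross_dir_dir, ← mul_assoc] at h
  exact (pos_iff_pos_of_mul_pos h).trans (sin_sub_pos_iff (hθ _) (hθ _))

lemma mul_neg_of_descent (hV : IsConvexCCW V)
    (hedge : ∀ i, V i - V (i - 1) = r i • dir (θ i)) (hθ : ∀ i, θ i ∈ Ico 0 π) {t : Fin n}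
    (ht : t ≠ 0) (ht₁ : t - 1 ≠ 0) (ht₂ : t - 1 - 1 ≠ 0) (h0t : θ 0 < θ t)
    (hdesc : θ t < θ (t - 1)) (hflip : r 0 * r (t - 1) < 0) : r 0 * r t < 0 := by
  have h₀ : 0 < r 0 * cross (dir (θ 0)) (V (t - 1) - V 0) := by
    have := hV 0 (t - 1) (fun h => ht (sub_left_injective h)) ht₁
    rwa [hedge, cross_smul_left] at this
  have h₂ : r (t - 1) * cross (dir (θ (t - 1))) (V (t - 1) - V 0) < 0 := by
    have := hV (t - 1) 0 ht₂.symm ht₁.symm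
    rwa [← neg_sub (V (t - 1)), hedge, cross_neg_right, cross_smul_left, neg_pos] at this
  have h₁ : r t * cross (dir (θ t)) (V (t - 1) - V 0) < 0 := by
    have := hV t 0 ht₁.symm ht.symm
    rwa [show V 0 - V t = -((V t - V (t - 1)) + (V (t - 1) - V 0)) by abel, cross_neg_right,
      cross_add_right, cross_self, zero_add, hedge, cross_smul_left, neg_pos] at this
  exact mul_neg_of_dir_between (hθ 0).1 h0t hdesc (hθ _).2 h₀ h₁ h₂ hflip

lemma mul_neg_of_mul_sub_one_neg (hn : 3 ≤ n) (hV : IsConvexCCW V)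
    (hedge : ∀ i, V i - V (i - 1) = r i • dir (θ i)) (hθ : ∀ i, θ i ∈ Ico 0 π)
    (hinj : Function.Injective θ) (hmin : ∀ i, θ 0 ≤ θ i) {t : Fin n} (ht : t ≠ 0)
    (hflip : r 0 * r (t - 1) < 0) : r 0 * r t < 0 := by
  have hmin' : ∀ i, i ≠ 0 → θ 0 < θ i := fun i hi => (hmin i).lt_of_ne (hinj.ne hi.symm)
  by_cases ht₁ : t - 1 = 0
  · rw [ht₁] at hflip
    exact absurd hflip (mul_self_nonneg _).not_gt
  by_cases ht₂ : t - 1 - 1 = 0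
  · have h1 : t - 1 = 1 := sub_eq_zero.mp ht₂
    have hasc := (edge_mul_pos_iff hn hV hedge hθ 1).2
    rw [sub_self] at hasc
    rw [h1] at hflip ht₁
    exact absurd (hasc (hmin' 1 ht₁)) hflip.not_gt
  rcases lt_or_gt_of_ne (hinj.ne (sub_one_ne_self (by omega) t)) with hasc | hdesc
  · have := (edge_mul_pos_iff hn hV hedge hθ t).2 hasc
    nlinarith [sq_nonneg (r (t - 1))]
  · exact mul_neg_of_descent hV hedge hθ ht ht₁ ht₂ (hmin' t ht) hdesc hflip

lemma mul_last_neg (hn : 3 ≤ n) (hV : IsConvexCCW V)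
    (hedge : ∀ i, V i - V (i - 1) = r i • dir (θ i)) (hθ : ∀ i, θ i ∈ Ico 0 π)
    (hr : ∀ i, r i ≠ 0) (hmin : ∀ i, θ 0 ≤ θ i) : r 0 * r (-1) < 0 := by
  have h := (edge_mul_pos_iff hn hV hedge hθ 0).not.2 (hmin _).not_gt
  rw [zero_sub, not_lt, mul_comm] at h
  exact h.lt_of_ne (mul_ne_zero (hr _) (hr _))

open Fin.CommRing in
theorem exists_two_strictMonoOn_runs_of_convex (hn : 3 ≤ n) (hV : IsConvexCCW V)
    (hedge : ∀ i, V i - V (i - 1) = r i • dir (θ i)) (hθ : ∀ i, θ i ∈ Ico 0 π)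
    (hr : ∀ i, r i ≠ 0) (hinj : Function.Injective θ) (hmin : ∀ i, θ 0 ≤ θ i) :
    ∃ j < n - 1, StrictMonoOn (fun k : ℕ => θ k) (Iic j) ∧
      StrictMonoOn (fun k : ℕ => θ k) (Icc (j + 1) (n - 1)) ∧ θ (j + 1 : ℕ) < θ j := by
  have hsucc : ∀ k : ℕ, ((k + 1 : ℕ) : Fin n) - 1 = k := fun k => by
    rw [Nat.cast_succ, add_sub_cancel_right]
  have hne : ∀ k < n - 1, ((k + 1 : ℕ) : Fin n) ≠ 0 := fun k hk => by
    rw [Ne, Fin.ext_iff, Fin.val_cast_of_lt (by omega)]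
    simp
  obtain ⟨j, hj, hinit, htail, hdesc⟩ :=
    exists_two_strictMonoOn_runs (N := n - 1) (θ := fun k : ℕ => θ k)
      (fun k => r 0 * r k < 0) (by simpa using (mul_self_nonneg (r 0)).not_gt)
      (by rw [Nat.cast_pred (NeZero.pos n), CharP.cast_eq_zero, zero_sub]
          exact mul_last_neg hn hV hedge hθ hr hmin)
      (fun k hk hflip => mul_neg_of_mul_sub_one_neg hn hV hedge hθ hinj hmin (hne k hk)
        (by rwa [hsucc]))
      (fun k hk => by
        rw [← mul_pos_iff_mul_neg_iff (hr 0) (hr _) (hr _), ← hsucc k]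
        exact (edge_mul_pos_iff hn hV hedge hθ _).symm)
  refine ⟨j, hj, hinit, htail, (not_lt.1 hdesc).lt_of_ne (hinj.ne fun h => ?_)⟩
  have := congrArg Fin.val h
  rw [Fin.val_cast_of_lt (by omega), Fin.val_cast_of_lt (by omega)] at this
  omega

end Polygon

end Gonality

/-- If points `V 0, …, V (n-1)` of `ℝ²` are in strictly convex, positively oriented
(anticlockwise) position, the direction angles `θ i ∈ [0, π)` of the edges are pairwise
distinct and `θ 0` is minimal, then the angle sequence splits into two increasing runs:
there is `j` with `1 ≤ j ≤ n - 1` such that `θ 0 < ⋯ < θ (j-1)`, `θ j < ⋯ < θ (n-1)`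
and `θ j < θ (j-1)`.  (Paper's Theorem: an anticlockwise `n`-gonality gives a
`2`-standard consecutive structure on the cycle at infinity respecting the slope
property; indices here are `0`-based.) -/
theorem cycle_at_infinity_of_global_gonality
    (n : ℕ) [NeZero n] (hn : 3 ≤ n)
    (V : Fin n → ℝ × ℝ) (θ : Fin n → ℝ)
    (hconvex : ∀ i k : Fin n, k ≠ i - 1 → k ≠ i →
      0 < (V i - V (i - 1)).1 * (V k - V i).2 - (V i - V (i - 1)).2 * (V k - V i).1)
    (hθrange : ∀ i : Fin n, θ i ∈ Set.Ico 0 Real.pi)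
    (hpar : ∀ i : Fin n, ∃ r : ℝ, r ≠ 0 ∧
      V i - V (i - 1) = r • (Real.cos (θ i), Real.sin (θ i)))
    (hinj : Function.Injective θ)
    (hmin : ∀ i : Fin n, θ 0 ≤ θ i) :
    ∃ j : ℕ, ∃ _h1 : 1 ≤ j, ∃ h2 : j < n,
      (∀ s t : Fin n, (s : ℕ) < (t : ℕ) → (t : ℕ) < j → θ s < θ t) ∧
      (∀ s t : Fin n, j ≤ (s : ℕ) → (s : ℕ) < (t : ℕ) → θ s < θ t) ∧
      θ ⟨j, h2⟩ < θ ⟨j - 1, lt_of_le_of_lt (Nat.sub_le j 1) h2⟩ := by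
  choose r hr hedge using hpar
  obtain ⟨j, hj, hinit, htail, hdesc⟩ :=
    Gonality.exists_two_strictMonoOn_runs_of_convex hn hconvex hedge hθrange hr hinj hmin
  open Fin.CommRing in
  have hθ : ∀ s : Fin n, θ s = θ (s : ℕ) := fun s => by rw [Fin.cast_val_eq_self]
  refine ⟨j + 1, by omega, by omega, fun s t hst htj => ?_, fun s t hjs hst => ?_, ?_⟩
  · rw [hθ s, hθ t]
    exact hinit (Set.mem_Iic.2 (by omega)) (Set.mem_Iic.2 (by omega)) hst
  · rw [hθ s, hθ t]
    exact htail ⟨hjs, by omega⟩ ⟨by omega, by omega⟩ hst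
  · rw [hθ ⟨j + 1, _⟩, hθ ⟨j + 1 - 1, _⟩]
    exact hdesc
end

section
/- Let F be a linearly ordered field, n ≥ 3, and let L_1, …, L_n be a line arrangement in F², where L_i is the zero set of an affine function f_i. With indices modulo n, let V_i = L_i ∩ L_{i+1}. Suppose that for each i there is a sign ε_i ∈ {−1, +1} such that ε_i · f_i(V_k) > 0 for every k ∉ {i−1, i}. Then the set R = {x ∈ F² : ε_i · f_i(x) ≥ 0 for all i} equals the convex hull of {V_1, …, V_n}, R contains no ray {v + t·w : t ≥ 0} with w ≠ 0 (i.e., R is bounded), and for each i the intersection R ∩ L_i is exactly the closed segment joining V_{i−1} and V_i. (Existence of global cyclicity: the n lines form an n-gonality.) -/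
/-!
Put `g i = ε i • f i`, so that `R = {x | ∀ i, 0 ≤ g i x}`. At a vertex `V k` the edge vectors
`u = V (k-1) - V k` and `u' = V (k+1) - V k` satisfy `g k u = 0 < g (k+1) u` and
`g (k+1) u' = 0 < g k u'` (on linear parts), so in the plane they form a basis, and every direction
`w` with `g k w ≥ 0` and `g (k+1) w ≥ 0` is a nonnegative combination of them: the tangent cone of
`R` at `V k` is spanned by the two edges. Everything follows from this:
* on the line `g i = 0` the cone at `V (i-1)` leaves only the edge direction, and the line `i+1`
  cuts it off at `V i`;
* a nonzero recession direction `w` would lie in the tangent cone at a vertex maximizing a linear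
  form `ψ` with `ψ w = 1`, where both edges point downhill for `ψ`;
* any `x ∈ R` lies between `V 0` and the point where the ray from `V 0` through `x` leaves `R`,
  which is on an edge.
-/

/-- The affine functional `p ↦ a i * p.1 + b i * p.2 - c i` cutting out the `i`-th line. -/
def arrLine {F : Type*} [Field F] [LinearOrder F] [IsStrictOrderedRing F] {n : ℕ} (a b c : Fin n → F)
    (i : Fin n) (p : F × F) : F :=
  a i * p.1 + b i * p.2 - c i

section FinIndex

open Fin.NatCast Fin.CommRing

variable {n : ℕ} [NeZero n]

theorem Fin.natCast_ne_zero_of_pos_of_lt {a : ℕ} (ha : 0 < a) (han : a < n) : (a : Fin n) ≠ 0 :=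
  fun h => absurd (Nat.le_of_dvd ha (Fin.natCast_eq_zero.mp h)) (not_le.mpr han)

theorem Fin.add_one_ne_self (hn : 2 ≤ n) (k : Fin n) : k + 1 ≠ k := fun h =>
  Fin.natCast_ne_zero_of_pos_of_lt (a := 1) Nat.one_pos hn (by push_cast; linear_combination h)

theorem Fin.sub_one_ne_self (hn : 2 ≤ n) (k : Fin n) : k - 1 ≠ k := fun h =>
  Fin.natCast_ne_zero_of_pos_of_lt (a := 1) Nat.one_pos hn (by push_cast; linear_combination -h)

theorem Fin.sub_one_ne_add_one (hn : 3 ≤ n) (k : Fin n) : k - 1 ≠ k + 1 := fun h =>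
  Fin.natCast_ne_zero_of_pos_of_lt (a := 2) Nat.two_pos hn (by push_cast; linear_combination -h)

end FinIndex

section AffineMap

variable {R E : Type*} [Ring R] [AddCommGroup E] [Module R E]

theorem AffineMap.linear_sub (f : E →ᵃ[R] R) (p q : E) : f.linear (p - q) = f p - f q :=
  f.linearMap_vsub p q

theorem AffineMap.apply_add_smul (f : E →ᵃ[R] R) (x w : E) (t : R) :
    f (x + t • w) = f x + t * f.linear w := by
  rw [← sub_eq_iff_eq_add', ← f.linear_sub, add_sub_cancel_left, map_smul, smul_eq_mul]

end AffineMap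

section HalfSpaces

variable {F : Type*} [Field F] [LinearOrder F] [IsStrictOrderedRing F]
  {E : Type*} [AddCommGroup E] [Module F E]

theorem nonneg_of_forall_nonneg_add_mul {a b : F} (h : ∀ t, 0 ≤ t → 0 ≤ a + t * b) : 0 ≤ b := by
  by_contra! hb
  have ha : 0 ≤ a := by simpa using h 0 le_rfl
  have := h ((a + 1) / -b) (div_nonneg (by linarith) (by linarith))
  rw [div_mul_eq_mul_div, div_neg, mul_div_cancel_right₀ _ hb.ne] at this
  linarith

theorem exists_nonneg_smul_add_smul_of_finrank_eq_two (hE : Module.finrank F E = 2)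
    (ℓ ℓ' : E →ₗ[F] F) {u u' w : E} (hℓu : ℓ u = 0) (hℓ'u : 0 < ℓ' u) (hℓu' : 0 < ℓ u')
    (hℓ'u' : ℓ' u' = 0) (hw : 0 ≤ ℓ w) (hw' : 0 ≤ ℓ' w) :
    ∃ α β : F, 0 ≤ α ∧ 0 ≤ β ∧ w = α • u + β • u' := by
  have hind : LinearIndependent F ![u, u'] := by
    refine LinearIndependent.pair_iff.mpr fun s t hst => ?_
    have h := congrArg ℓ hst
    have h' := congrArg ℓ' hst
    simp only [map_add, map_smul, smul_eq_mul, hℓu, hℓ'u', map_zero, mul_zero, zero_add,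
      add_zero] at h h'
    exact ⟨(mul_eq_zero.mp h').resolve_right hℓ'u.ne', (mul_eq_zero.mp h).resolve_right hℓu'.ne'⟩
  obtain ⟨α, β, rfl⟩ : ∃ α β : F, α • u + β • u' = w := by
    rw [← Submodule.mem_span_pair, ← Matrix.range_cons_cons_empty,
      hind.span_eq_top_of_card_eq_finrank (by simp [hE])]
    exact Submodule.mem_top
  simp only [map_add, map_smul, smul_eq_mul, hℓu, hℓ'u', mul_zero, zero_add, add_zero] at hw hw'
  exact ⟨α, β, nonneg_of_mul_nonneg_left hw' hℓ'u, nonneg_of_mul_nonneg_left hw hℓu', rfl⟩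

def halfSpaceInter {ι : Type*} (g : ι → E →ᵃ[F] F) : Set E := {x | ∀ i, 0 ≤ g i x}

theorem convex_halfSpaceInter {ι : Type*} (g : ι → E →ᵃ[F] F) : Convex F (halfSpaceInter g) := by
  have : halfSpaceInter g = ⋂ i, g i ⁻¹' Set.Ici 0 := by ext; simp [halfSpaceInter]
  rw [this]
  exact convex_iInter fun i => (convex_Ici 0).affine_preimage (g i)

theorem exists_add_smul_mem_halfSpaceInter_apply_eq_zero {ι : Type*} [Fintype ι]
    {g : ι → E →ᵃ[F] F} {x w : E} (hx : x ∈ halfSpaceInter g) (hw : ∃ i, (g i).linear w < 0) :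
    ∃ T : F, 0 ≤ T ∧ ∃ j, x + T • w ∈ halfSpaceInter g ∧ g j (x + T • w) = 0 := by
  classical
  obtain ⟨j, hj, hmin⟩ := (Finset.univ.filter fun i => (g i).linear w < 0).exists_min_image
    (fun i => g i x / -(g i).linear w) (by simpa [Finset.filter_nonempty_iff] using hw)
  simp only [Finset.mem_filter, Finset.mem_univ, true_and] at hj hmin
  refine ⟨g j x / -(g j).linear w, div_nonneg (hx j) (by linarith), j, fun i => ?_, ?_⟩
  · rw [(g i).apply_add_smul]
    rcases lt_or_ge ((g i).linear w) 0 with hi | hi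
    · have := (le_div_iff₀ (neg_pos.mpr hi)).mp (hmin i hi)
      linarith
    · exact add_nonneg (hx i) (mul_nonneg (div_nonneg (hx j) (by linarith)) hi)
  · rw [(g j).apply_add_smul, div_mul_eq_mul_div, div_neg, mul_div_cancel_right₀ _ hj.ne]
    ring

theorem AffineMap.apply_eq_zero_of_mem_segment (f : E →ᵃ[F] F) {p q x : E} (hp : f p = 0)
    (hq : f q = 0) (hx : x ∈ segment F p q) : f x = 0 := by
  have := image_segment F f p q ▸ Set.mem_image_of_mem f hx
  rwa [hp, hq, segment_same] at this

end HalfSpaces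

section CyclicPolygon

variable {F : Type*} [Field F] [LinearOrder F] {E : Type*} [AddCommGroup E] [Module F E]

/-- `g i ≥ 0` is a half-plane bounded by the `i`-th line, and `V i` is the vertex where the
`i`-th and `(i+1)`-st lines meet. -/
structure IsCyclicPolygon {n : ℕ} [NeZero n] (g : Fin n → E →ᵃ[F] F) (V : Fin n → E) : Prop where
  three_le : 3 ≤ n
  apply_self : ∀ i, g i (V i) = 0
  apply_succ : ∀ i, g (i + 1) (V i) = 0
  apply_pos : ∀ i k, k ≠ i - 1 → k ≠ i → 0 < g i (V k)

namespace IsCyclicPolygon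

variable {n : ℕ} [NeZero n] {g : Fin n → E →ᵃ[F] F} {V : Fin n → E}

theorem apply_pred (h : IsCyclicPolygon g V) (i : Fin n) : g i (V (i - 1)) = 0 := by
  simpa using h.apply_succ (i - 1)

theorem apply_succ_pos (h : IsCyclicPolygon g V) (k : Fin n) : 0 < g k (V (k + 1)) :=
  h.apply_pos k (k + 1) (Fin.sub_one_ne_add_one h.three_le k).symm
    (Fin.add_one_ne_self (Nat.le_of_succ_le h.three_le) k)

theorem apply_succ_pred_pos (h : IsCyclicPolygon g V) (k : Fin n) : 0 < g (k + 1) (V (k - 1)) :=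
  h.apply_pos (k + 1) (k - 1)
    (by rw [add_sub_cancel_right]; exact Fin.sub_one_ne_self (Nat.le_of_succ_le h.three_le) k)
    (Fin.sub_one_ne_add_one h.three_le k)

theorem vertex_mem_halfSpaceInter (h : IsCyclicPolygon g V) (k : Fin n) :
    V k ∈ halfSpaceInter g := by
  intro i
  by_cases hk : k = i - 1
  · rw [hk, h.apply_pred]
  by_cases hk' : k = i
  · rw [hk', h.apply_self]
  exact (h.apply_pos i k hk hk').le

variable [IsStrictOrderedRing F]

theorem convexHull_subset_halfSpaceInter (h : IsCyclicPolygon g V) :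
    convexHull F (Set.range V) ⊆ halfSpaceInter g :=
  convexHull_min (Set.range_subset_iff.mpr h.vertex_mem_halfSpaceInter) (convex_halfSpaceInter g)

theorem segment_subset_halfSpaceInter (h : IsCyclicPolygon g V) (i : Fin n) :
    segment F (V (i - 1)) (V i) ⊆ halfSpaceInter g :=
  (segment_subset_convexHull (Set.mem_range_self _) (Set.mem_range_self _)).trans
    h.convexHull_subset_halfSpaceInter

theorem exists_eq_smul_add_smul (h : IsCyclicPolygon g V) (hE : Module.finrank F E = 2) (k : Fin n)
    {w : E} (hk : 0 ≤ (g k).linear w) (hk' : 0 ≤ (g (k + 1)).linear w) :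
    ∃ α β : F, 0 ≤ α ∧ 0 ≤ β ∧ w = α • (V (k - 1) - V k) + β • (V (k + 1) - V k) := by
  refine exists_nonneg_smul_add_smul_of_finrank_eq_two hE _ _ ?_ ?_ ?_ ?_ hk hk' <;>
    simp only [AffineMap.linear_sub, h.apply_self, h.apply_pred, h.apply_succ, sub_zero,
      sub_self, h.apply_succ_pos, h.apply_succ_pred_pos]

theorem mem_segment_of_apply_eq_zero (h : IsCyclicPolygon g V) (hE : Module.finrank F E = 2)
    {x : E} (hx : x ∈ halfSpaceInter g) {i : Fin n} (hxi : g i x = 0) :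
    x ∈ segment F (V (i - 1)) (V i) := by
  obtain ⟨k, rfl⟩ : ∃ k, i = k + 1 := ⟨i - 1, (sub_add_cancel i 1).symm⟩
  rw [add_sub_cancel_right]
  obtain ⟨α, β, hα, hβ, hw⟩ := h.exists_eq_smul_add_smul hE k (w := x - V k)
    (by simpa [AffineMap.linear_sub, h.apply_self] using hx k)
    (by simpa [AffineMap.linear_sub, h.apply_succ] using hx (k + 1))
  have hα0 : α = 0 := by
    have := congrArg (g (k + 1)).linear hw
    simp only [map_add, map_smul, AffineMap.linear_sub, hxi, h.apply_succ, h.apply_self,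
      smul_eq_mul, sub_zero, sub_self, mul_zero, add_zero] at this
    exact (mul_eq_zero.mp this.symm).resolve_right (h.apply_succ_pred_pos k).ne'
  have hβ1 : β ≤ 1 := by
    have := congrArg (g (k + 1 + 1)).linear hw
    simp only [map_add, map_smul, AffineMap.linear_sub, h.apply_succ, smul_eq_mul, hα0,
      zero_mul, zero_add] at this
    have hpos := h.apply_succ_pred_pos (k + 1)
    rw [add_sub_cancel_right] at hpos
    have : 0 ≤ (1 - β) * g (k + 1 + 1) (V k) := by linarith [hx (k + 1 + 1)]
    exact sub_nonneg.mp (nonneg_of_mul_nonneg_left this hpos)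
  rw [hα0, zero_smul, zero_add] at hw
  rw [segment_eq_image']
  refine ⟨β, ⟨hβ, hβ1⟩, ?_⟩
  show V k + β • (V (k + 1) - V k) = x
  rw [← hw, add_sub_cancel]

theorem eq_zero_of_forall_linear_nonneg (h : IsCyclicPolygon g V) (hE : Module.finrank F E = 2)
    {w : E} (hw : ∀ i, 0 ≤ (g i).linear w) : w = 0 := by
  by_contra hw0
  obtain ⟨ψ, hψ⟩ := Module.Projective.exists_dual_eq_one F hw0
  obtain ⟨k, hk⟩ := Finite.exists_max fun i => ψ (V i)
  obtain ⟨α, β, hα, hβ, rfl⟩ := h.exists_eq_smul_add_smul hE k (hw k) (hw (k + 1))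
  simp only [map_add, map_smul, map_sub, smul_eq_mul] at hψ
  have := mul_nonpos_of_nonneg_of_nonpos hα (sub_nonpos.mpr (hk (k - 1)))
  have := mul_nonpos_of_nonneg_of_nonpos hβ (sub_nonpos.mpr (hk (k + 1)))
  linarith

theorem not_exists_ray (h : IsCyclicPolygon g V) (hE : Module.finrank F E = 2) :
    ¬ ∃ v w : E, w ≠ 0 ∧ ∀ t : F, 0 ≤ t → v + t • w ∈ halfSpaceInter g := by
  rintro ⟨v, w, hw, hray⟩
  refine hw (h.eq_zero_of_forall_linear_nonneg hE fun i =>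
    nonneg_of_forall_nonneg_add_mul (a := g i v) fun t ht => ?_)
  rw [← (g i).apply_add_smul]
  exact hray t ht i

theorem halfSpaceInter_subset_convexHull (h : IsCyclicPolygon g V)
    (hE : Module.finrank F E = 2) : halfSpaceInter g ⊆ convexHull F (Set.range V) := by
  intro x hx
  by_cases hw : ∀ i, 0 ≤ (g i).linear (x - V 0)
  · rw [sub_eq_zero.mp (h.eq_zero_of_forall_linear_nonneg hE hw)]
    exact subset_convexHull F _ (Set.mem_range_self 0)
  push Not at hw
  obtain ⟨T, hT, j, hy, hyj⟩ := exists_add_smul_mem_halfSpaceInter_apply_eq_zero hx hw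
  have hy' : x + T • (x - V 0) ∈ convexHull F (Set.range V) :=
    segment_subset_convexHull (Set.mem_range_self _) (Set.mem_range_self _)
      (h.mem_segment_of_apply_eq_zero hE hy hyj)
  refine (convex_convexHull F _).segment_subset (subset_convexHull F _ (Set.mem_range_self 0))
    hy' ?_
  rw [mem_segment_iff_sameRay, add_sub_cancel_left]
  exact SameRay.sameRay_nonneg_smul_right _ hT

theorem halfSpaceInter_eq_convexHull (h : IsCyclicPolygon g V) (hE : Module.finrank F E = 2) :
    halfSpaceInter g = convexHull F (Set.range V) :=
  (h.halfSpaceInter_subset_convexHull hE).antisymm h.convexHull_subset_halfSpaceInter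

end IsCyclicPolygon

end CyclicPolygon

section ArrLine

variable {F : Type*} [Field F] [LinearOrder F] [IsStrictOrderedRing F] {n : ℕ}

def arrLineAffine (a b c : Fin n → F) (i : Fin n) : F × F →ᵃ[F] F where
  toFun := arrLine a b c i
  linear := a i • LinearMap.fst F F F + b i • LinearMap.snd F F F
  map_vadd' p v := by
    simp only [arrLine, vadd_eq_add, Prod.fst_add, Prod.snd_add, LinearMap.add_apply,
      LinearMap.smul_apply, LinearMap.fst_apply, LinearMap.snd_apply, smul_eq_mul]
    ring

@[simp]
theorem arrLineAffine_apply (a b c : Fin n → F) (i : Fin n) (p : F × F) :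
    arrLineAffine a b c i p = arrLine a b c i p :=
  rfl

end ArrLine

theorem existence_of_global_cyclicity_general
    {F : Type*} [Field F] [LinearOrder F] [IsStrictOrderedRing F] (n : ℕ) [NeZero n] (hn : 3 ≤ n)
    (a b c : Fin n → F)
    (V : Fin n → F × F)
    (hV : ∀ i : Fin n, arrLine a b c i (V i) = 0 ∧ arrLine a b c (i + 1) (V i) = 0)
    (ε : Fin n → F)
    (hside : ∀ i k : Fin n, k ≠ i - 1 → k ≠ i → 0 < ε i * arrLine a b c i (V k)) :
    {x : F × F | ∀ i : Fin n, 0 ≤ ε i * arrLine a b c i x} = convexHull F (Set.range V) ∧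
    (¬ ∃ v w : F × F, w ≠ 0 ∧ ∀ t : F, 0 ≤ t →
      v + t • w ∈ {x : F × F | ∀ i : Fin n, 0 ≤ ε i * arrLine a b c i x}) ∧
    (∀ i : Fin n,
      {x : F × F | ∀ j : Fin n, 0 ≤ ε j * arrLine a b c j x} ∩ {x : F × F | arrLine a b c i x = 0}
        = segment F (V (i - 1)) (V i)) := by
  let g i := ε i • arrLineAffine a b c i
  have hg : IsCyclicPolygon g V :=
    ⟨hn, fun i => by simp [g, (hV i).1], fun i => by simp [g, (hV i).2], hside⟩
  have hE : Module.finrank F (F × F) = 2 := by simp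
  have hR : {x : F × F | ∀ i, 0 ≤ ε i * arrLine a b c i x} = halfSpaceInter g := rfl
  refine ⟨hR ▸ hg.halfSpaceInter_eq_convexHull hE, hR ▸ hg.not_exists_ray hE, fun i => ?_⟩
  rw [hR]
  refine Set.Subset.antisymm (fun x ⟨hx, hxi⟩ => hg.mem_segment_of_apply_eq_zero hE hx ?_)
    fun x hx => ⟨?_, ?_⟩
  · simp [g, show arrLine a b c i x = 0 from hxi]
  · exact hg.segment_subset_halfSpaceInter i hx
  · exact (arrLineAffine a b c i).apply_eq_zero_of_mem_segment
      (by simpa using (hV (i - 1)).2) (hV i).1 hx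

/-- Existence of global cyclicity: if for each line `L i` of a line arrangement the
vertices `V k = L k ∩ L (k+1)` with `k ∉ {i-1, i}` lie strictly on one side of `L i`
(sign `ε i`), then the region `R = {x | ε i • f i x ≥ 0 ∀ i}` is the convex hull of the
vertices `V 0, …, V (n-1)`, it is bounded (contains no ray), and `R ∩ L i` is exactly
the closed segment from `V (i-1)` to `V i`: the `n` lines form an `n`-gonality. -/
theorem existence_of_global_cyclicity
    {F : Type*} [Field F] [LinearOrder F] [IsStrictOrderedRing F] (n : ℕ) [NeZero n] (hn : 3 ≤ n)
    (a b c : Fin n → F)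
    (hnd : ∀ i : Fin n, (a i, b i) ≠ (0, 0))
    (hpar : ∀ i j : Fin n, i ≠ j → a i * b j ≠ a j * b i)
    (hconc : ∀ i j k : Fin n, i ≠ j → j ≠ k → i ≠ k →
      ¬ ∃ p : F × F, arrLine a b c i p = 0 ∧ arrLine a b c j p = 0 ∧ arrLine a b c k p = 0)
    (V : Fin n → F × F)
    (hV : ∀ i : Fin n, arrLine a b c i (V i) = 0 ∧ arrLine a b c (i + 1) (V i) = 0)
    (ε : Fin n → F) (hε : ∀ i : Fin n, ε i = 1 ∨ ε i = -1)
    (hside : ∀ i k : Fin n, k ≠ i - 1 → k ≠ i → 0 < ε i * arrLine a b c i (V k)) :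
    {x : F × F | ∀ i : Fin n, 0 ≤ ε i * arrLine a b c i x} = convexHull F (Set.range V) ∧
    (¬ ∃ v w : F × F, w ≠ 0 ∧ ∀ t : F, 0 ≤ t →
      v + t • w ∈ {x : F × F | ∀ i : Fin n, 0 ≤ ε i * arrLine a b c i x}) ∧
    (∀ i : Fin n,
      {x : F × F | ∀ j : Fin n, 0 ≤ ε j * arrLine a b c j x} ∩ {x : F × F | arrLine a b c i x = 0}
        = segment F (V (i - 1)) (V i)) :=
  existence_of_global_cyclicity_general n hn a b c V hV ε hside
end

section
/- Let F be a linearly ordered field, n ≥ 3, and let L_1, …, L_n be a line arrangement in F² given by affine functions f_i. With indices modulo n, let V_i = L_i ∩ L_{i+1}, and suppose that for each i there is a sign ε_i ∈ {−1, +1} such that ε_i · f_i(V_k) > 0 for every k ∉ {i−1, i}. Then for each i the vertices V_{i−1} and V_i are adjacent on L_i: no line L_j with j ≠ i contains a point of the open segment {(1−t)·V_{i−1} + t·V_i : 0 < t < 1}. -/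
section

variable {F : Type*} [Field F] [LinearOrder F] [IsStrictOrderedRing F] {n : ℕ}

lemma arrLine_one_sub_smul_add_smul (a b c : Fin n → F) (j : Fin n) (P Q : F × F) (t : F) :
    arrLine a b c j ((1 - t) • P + t • Q) = (1 - t) * arrLine a b c j P + t * arrLine a b c j Q := by
  simp only [arrLine, Prod.fst_add, Prod.snd_add, Prod.smul_fst, Prod.smul_snd, smul_eq_mul]
  ring

lemma one_sub_mul_add_mul_ne_zero {R : Type*} [CommRing R] [LinearOrder R] [IsStrictOrderedRing R]
    {e u v t : R} (ht0 : 0 < t) (ht1 : t < 1) (hu : 0 ≤ e * u) (hv : 0 ≤ e * v)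
    (hpos : 0 < e * u ∨ 0 < e * v) : (1 - t) * u + t * v ≠ 0 := by
  have hcomb : e * ((1 - t) * u + t * v) = (1 - t) * (e * u) + t * (e * v) := by ring
  have : 0 < e * ((1 - t) * u + t * v) := by
    rcases hpos with hpos | hpos <;> nlinarith
  exact right_ne_zero_of_mul this.ne'

lemma sign_mul_arrLine_vertex_nonneg [NeZero n] {a b c : Fin n → F} {V : Fin n → F × F}
    {ε : Fin n → F}
    (hV : ∀ i : Fin n, arrLine a b c i (V i) = 0 ∧ arrLine a b c (i + 1) (V i) = 0)
    (hside : ∀ i k : Fin n, k ≠ i - 1 → k ≠ i → 0 < ε i * arrLine a b c i (V k)) (j k : Fin n) :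
    0 ≤ ε j * arrLine a b c j (V k) := by
  by_cases hprev : k = j - 1
  · have := (hV (j - 1)).2
    rw [sub_add_cancel] at this
    rw [hprev, this, mul_zero]
  by_cases hcur : k = j
  · rw [hcur, (hV j).1, mul_zero]
  exact (hside j k hprev hcur).le

end

lemma Fin.one_add_one_ne_zero {n : ℕ} [NeZero n] (hn : 3 ≤ n) : (1 + 1 : Fin n) ≠ 0 := by
  rw [Ne, Fin.ext_iff, Fin.val_add, Fin.val_one', Nat.one_mod_eq_one.mpr (by omega),
    Nat.mod_eq_of_lt (by omega), Fin.val_zero]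
  omega

lemma Fin.self_or_sub_one_ne_sub_one_and_ne {n : ℕ} [NeZero n] (hn : 3 ≤ n) {i j : Fin n}
    (hji : j ≠ i) :
    (i ≠ j - 1 ∧ i ≠ j) ∨ (i - 1 ≠ j - 1 ∧ i - 1 ≠ j) := by
  by_cases hij : i = j - 1
  · refine Or.inr ⟨fun h => hji (sub_left_injective h).symm, ?_⟩
    rw [hij, sub_sub, Ne, sub_eq_self]
    exact Fin.one_add_one_ne_zero hn
  · exact Or.inl ⟨hij, hji.symm⟩

theorem adjacent_vertices_of_global_cyclicity_general
    {F : Type*} [Field F] [LinearOrder F] [IsStrictOrderedRing F] (n : ℕ) [NeZero n] (hn : 3 ≤ n)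
    (a b c : Fin n → F)
    (V : Fin n → F × F)
    (hV : ∀ i : Fin n, arrLine a b c i (V i) = 0 ∧ arrLine a b c (i + 1) (V i) = 0)
    (ε : Fin n → F)
    (hside : ∀ i k : Fin n, k ≠ i - 1 → k ≠ i → 0 < ε i * arrLine a b c i (V k)) :
    ∀ i j : Fin n, j ≠ i → ∀ t : F, 0 < t → t < 1 →
      arrLine a b c j ((1 - t) • V (i - 1) + t • V i) ≠ 0 := by
  intro i j hji t ht0 ht1
  have hnonneg := sign_mul_arrLine_vertex_nonneg hV hside j
  rw [arrLine_one_sub_smul_add_smul]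
  refine one_sub_mul_add_mul_ne_zero ht0 ht1 (hnonneg (i - 1)) (hnonneg i) ?_
  rcases Fin.self_or_sub_one_ne_sub_one_and_ne hn hji with ⟨hprev, hcur⟩ | ⟨hprev, hcur⟩
  · exact Or.inr (hside j i hprev hcur)
  · exact Or.inl (hside j (i - 1) hprev hcur)

/-- If for each line `L i` of a line arrangement the vertices `V k = L k ∩ L (k+1)` with
`k ∉ {i-1, i}` lie strictly on one side of `L i`, then for each `i` the vertices
`V (i-1)` and `V i` are adjacent on `L i`: no line `L j` with `j ≠ i` meets the open
segment between them. -/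
theorem adjacent_vertices_of_global_cyclicity
    {F : Type*} [Field F] [LinearOrder F] [IsStrictOrderedRing F] (n : ℕ) [NeZero n] (hn : 3 ≤ n)
    (a b c : Fin n → F)
    (hnd : ∀ i : Fin n, (a i, b i) ≠ (0, 0))
    (hpar : ∀ i j : Fin n, i ≠ j → a i * b j ≠ a j * b i)
    (hconc : ∀ i j k : Fin n, i ≠ j → j ≠ k → i ≠ k →
      ¬ ∃ p : F × F, arrLine a b c i p = 0 ∧ arrLine a b c j p = 0 ∧ arrLine a b c k p = 0)
    (V : Fin n → F × F)
    (hV : ∀ i : Fin n, arrLine a b c i (V i) = 0 ∧ arrLine a b c (i + 1) (V i) = 0)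
    (ε : Fin n → F) (hε : ∀ i : Fin n, ε i = 1 ∨ ε i = -1)
    (hside : ∀ i k : Fin n, k ≠ i - 1 → k ≠ i → 0 < ε i * arrLine a b c i (V k)) :
    ∀ i j : Fin n, j ≠ i → ∀ t : F, 0 < t → t < 1 →
      arrLine a b c j ((1 - t) • V (i - 1) + t • V i) ≠ 0 :=
  adjacent_vertices_of_global_cyclicity_general n hn a b c V hV ε hside
end

section
/- Let n ≥ 3 and let θ_1, …, θ_n ∈ [0, π) be pairwise distinct with θ_1 = min{θ_1, …, θ_n}, and suppose there exists j with 1 ≤ j ≤ n−1 such that θ_1 < θ_2 < ⋯ < θ_j, θ_{j+1} < θ_{j+2} < ⋯ < θ_n, and θ_{j+1} < θ_j. Then there exist points V_1, …, V_n ∈ ℝ² in strictly convex, positively oriented position (with indices modulo n, det(V_i − V_{i−1}, V_k − V_i) > 0 for every i and every k ∉ {i−1, i}) such that for each i the edge vector V_i − V_{i−1} is parallel to (cos θ_i, sin θ_i). (Any prescribed 2-standard consecutive slope pattern respecting the slope property is realized by an anticlockwise n-gonality L_1 → L_2 → ⋯ → L_n → L_1 of lines with the given directions.) -/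
/-!
Reversing the directions of the second run, `θ i ↦ θ i + π` for `i ≥ j`, turns the angles into
a strictly increasing sequence `Φ` of edge directions inside `[θ 0, θ 0 + 2π)` in which every
turn `Φ (i + 1) - Φ i`, and the closing turn `Φ 0 + 2π - Φ (n - 1)`, lies in `(0, π)`: the jump
`θ j < θ (j - 1)` is the turn at the junction and the minimality of `θ 0` gives the closing
turn. Such directions are realised by the polygon circumscribed about the unit circle whose
`i`-th side lies on the tangent line with direction `Φ i`. Its `k`-th vertex sees the side
`i` from the inner side exactly when `Φ i` avoids the arc from `Φ k` to `Φ (k + 1)`, which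
holds for every `k ∉ {i - 1, i}` by monotonicity.
-/

open Real

namespace TangentPolygon

noncomputable section

def cross (u v : ℝ × ℝ) : ℝ := u.1 * v.2 - u.2 * v.1

def dir (t : ℝ) : ℝ × ℝ := (cos t, sin t)

/-- The point where the tangent line of the unit circle with direction `dir t` touches it;
the circle lies to the left of that line. -/
def touchPoint (t : ℝ) : ℝ × ℝ := (sin t, -cos t)

/-- The intersection of the tangent lines with directions `dir a` and `dir b`. -/
def tangentVertex (a b : ℝ) : ℝ × ℝ := touchPoint a + tan ((b - a) / 2) • dir a

lemma cross_smul_sub (r : ℝ) (u v w : ℝ × ℝ) :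
    cross (r • u) (v - w) = r * (cross u v - cross u w) := by
  simp only [cross, Prod.smul_fst, Prod.smul_snd, Prod.fst_sub, Prod.snd_sub, smul_eq_mul]
  ring

lemma dir_add_pi (t : ℝ) : dir (t + π) = -dir t := by
  simp [dir, cos_add_pi, sin_add_pi]

lemma cross_dir_tangentVertex (t a b : ℝ) :
    cross (dir t) (tangentVertex a b) = -cos (t - a) - tan ((b - a) / 2) * sin (t - a) := by
  simp only [cross, tangentVertex, touchPoint, dir, Prod.fst_add, Prod.snd_add, Prod.smul_fst,
    Prod.smul_snd, smul_eq_mul, cos_sub, sin_sub]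
  ring

lemma cross_dir_tangentVertex_self (a b : ℝ) : cross (dir a) (tangentVertex a b) = -1 := by
  simp [cross_dir_tangentVertex]

lemma cos_lt_cos_of_mem_Ioo {h x : ℝ} (h0 : 0 < h) (hx : h < x)
    (hx' : x < 2 * π - h) : cos x < cos h := by
  rcases le_or_gt x π with hxπ | hxπ
  · exact cos_lt_cos_of_nonneg_of_le_pi h0.le hxπ hx
  · rw [← cos_two_pi_sub x]
    exact cos_lt_cos_of_nonneg_of_le_pi h0.le (by linarith) (by linarith)

/-- `-1 < cross (dir t) x` says that `x` lies strictly to the left of the tangent line with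
direction `dir t`. -/
lemma neg_one_lt_cross_dir_tangentVertex {a b t : ℝ} (hab : a < b) (hba : b < a + π)
    (hbt : b < t) (hta : t < a + 2 * π) : -1 < cross (dir t) (tangentVertex a b) := by
  obtain ⟨h, hh⟩ : ∃ h, h = (b - a) / 2 := ⟨_, rfl⟩
  have hcos : 0 < cos h := cos_pos_of_mem_Ioo ⟨by linarith, by linarith⟩
  have hlt : cos (t - a - h) < cos h :=
    cos_lt_cos_of_mem_Ioo (by linarith) (by linarith) (by linarith)
  have hcross : cross (dir t) (tangentVertex a b) + 1 = (cos h - cos (t - a - h)) / cos h := by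
    rw [cross_dir_tangentVertex, ← hh, tan_eq_sin_div_cos, cos_sub (t - a) h]
    field_simp
    ring
  linarith [div_pos (sub_pos.2 hlt) hcos]

lemma tangentVertex_eq_sub {a b : ℝ} (hcos : cos ((b - a) / 2) ≠ 0) :
    tangentVertex a b = touchPoint b - tan ((b - a) / 2) • dir b := by
  obtain ⟨c, h, rfl, rfl⟩ : ∃ c h, a = c - h ∧ b = c + h :=
    ⟨(a + b) / 2, (b - a) / 2, by ring, by ring⟩
  rw [show (c + h - (c - h)) / 2 = h by ring] at hcos
  rw [tangentVertex, show (c + h - (c - h)) / 2 = h by ring, tan_eq_sin_div_cos]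
  ext
  · simp only [touchPoint, dir, Prod.fst_add, Prod.fst_sub, Prod.smul_fst,
      smul_eq_mul, sin_add, sin_sub, cos_add, cos_sub]
    field_simp
    ring
  · simp only [touchPoint, dir, Prod.snd_add, Prod.snd_sub, Prod.smul_snd,
      smul_eq_mul, sin_add, sin_sub, cos_add, cos_sub]
    field_simp
    ring

section Polygon

variable {m : ℕ} (Φ : Fin (m + 1) → ℝ)

/-- Lifted by `2π` after the last side, so that `nextAngle Φ k - Φ k` is the turn at vertex `k`. -/
def nextAngle (k : Fin (m + 1)) : ℝ := if k = Fin.last m then Φ 0 + 2 * π else Φ (k + 1)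

lemma nextAngle_last : nextAngle Φ (Fin.last m) = Φ 0 + 2 * π := if_pos rfl

lemma nextAngle_of_ne_last {k : Fin (m + 1)} (hk : k ≠ Fin.last m) :
    nextAngle Φ k = Φ (k + 1) :=
  if_neg hk

lemma nextAngle_sub_one (i : Fin (m + 1)) :
    nextAngle Φ (i - 1) = Φ i ∨ nextAngle Φ (i - 1) = Φ i + 2 * π := by
  by_cases hi : i - 1 = Fin.last m
  · have hi0 : i = 0 := by rw [← sub_add_cancel i 1, hi, Fin.last_add_one]
    right
    rw [hi, nextAngle_last, hi0]
  · left
    rw [nextAngle_of_ne_last Φ hi, sub_add_cancel]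

variable {Φ}

lemma lt_nextAngle (hmono : StrictMono Φ) (hlast : Φ (Fin.last m) < Φ 0 + 2 * π)
    (k : Fin (m + 1)) : Φ k < nextAngle Φ k := by
  by_cases hk : k = Fin.last m
  · rw [hk, nextAngle_last]
    exact hlast
  · rw [nextAngle_of_ne_last Φ hk]
    exact hmono (Fin.lt_add_one_iff.2 (lt_of_le_of_ne (Fin.le_last k) hk))

lemma exists_lift_mem_Ioo (hmono : StrictMono Φ) (hlast : Φ (Fin.last m) < Φ 0 + 2 * π)
    {i k : Fin (m + 1)} (hki : k ≠ i - 1) (hk : k ≠ i) :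
    ∃ t, (t = Φ i ∨ t = Φ i + 2 * π) ∧ nextAngle Φ k < t ∧ t < Φ k + 2 * π := by
  have hsucc : k + 1 ≠ i := fun h => hki (eq_sub_of_add_eq h)
  have hle : ∀ a, Φ 0 ≤ Φ a ∧ Φ a ≤ Φ (Fin.last m) := fun a =>
    ⟨hmono.monotone (Fin.zero_le a), hmono.monotone (Fin.le_last a)⟩
  rcases lt_or_gt_of_ne hk with hlt | hgt
  · have hkl : k ≠ Fin.last m := (hlt.trans_le (Fin.le_last i)).ne
    refine ⟨Φ i, Or.inl rfl, ?_, by linarith [hle i, hle k]⟩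
    rw [nextAngle_of_ne_last Φ hkl]
    exact hmono (lt_of_le_of_ne (Fin.add_one_le_of_lt hlt) hsucc)
  · refine ⟨Φ i + 2 * π, Or.inr rfl, ?_, by linarith [hmono hgt]⟩
    by_cases hkl : k = Fin.last m
    · rw [hkl, Fin.last_add_one] at hsucc
      rw [hkl, nextAngle_last]
      linarith [hmono (Fin.pos_iff_ne_zero.2 (Ne.symm hsucc))]
    · rw [nextAngle_of_ne_last Φ hkl]
      linarith [hle (k + 1), hle i]

theorem exists_convex_polygon (hmono : StrictMono Φ) (hlast : Φ (Fin.last m) < Φ 0 + 2 * π)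
    (hturn : ∀ k, nextAngle Φ k < Φ k + π) :
    ∃ V : Fin (m + 1) → ℝ × ℝ,
      (∀ i k, k ≠ i - 1 → k ≠ i → 0 < cross (V i - V (i - 1)) (V k - V i)) ∧
      ∀ i, ∃ r : ℝ, 0 < r ∧ V i - V (i - 1) = r • dir (Φ i) := by
  set gap : Fin (m + 1) → ℝ := fun k => nextAngle Φ k - Φ k
  have hgap : ∀ k, 0 < gap k ∧ gap k < π := fun k =>
    ⟨sub_pos.2 (lt_nextAngle hmono hlast k), by linarith [hturn k]⟩
  have htan : ∀ k, 0 < tan (gap k / 2) := fun k =>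
    tan_pos_of_pos_of_lt_pi_div_two (by linarith [hgap k]) (by linarith [hgap k])
  set V : Fin (m + 1) → ℝ × ℝ := fun k => tangentVertex (Φ k) (nextAngle Φ k) with hV_def
  have hprev : ∀ i, V (i - 1) = touchPoint (Φ i) - tan (gap (i - 1) / 2) • dir (Φ i) := by
    intro i
    have hcos : cos (gap (i - 1) / 2) ≠ 0 :=
      (cos_pos_of_mem_Ioo ⟨by linarith [hgap (i - 1)], by linarith [hgap (i - 1)]⟩).ne'
    obtain ⟨hc, hs⟩ : cos (nextAngle Φ (i - 1)) = cos (Φ i) ∧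
        sin (nextAngle Φ (i - 1)) = sin (Φ i) := by
      rcases nextAngle_sub_one Φ i with h | h <;> simp [h]
    rw [show V (i - 1) = tangentVertex (Φ (i - 1)) (nextAngle Φ (i - 1)) from rfl,
      tangentVertex_eq_sub hcos]
    simp only [touchPoint, dir, hc, hs]
    rfl
  have hedge : ∀ i, V i - V (i - 1) = (tan (gap i / 2) + tan (gap (i - 1) / 2)) • dir (Φ i) := by
    intro i
    rw [hprev]
    simp only [hV_def, tangentVertex]
    module
  refine ⟨V, fun i k hki hk => ?_, fun i => ⟨_, add_pos (htan i) (htan (i - 1)), hedge i⟩⟩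
  obtain ⟨t, ht, hnext, hlt⟩ := exists_lift_mem_Ioo hmono hlast hki hk
  have hdir : dir t = dir (Φ i) := by rcases ht with rfl | rfl <;> simp [dir]
  have hinside : -1 < cross (dir t) (V k) :=
    neg_one_lt_cross_dir_tangentVertex (lt_nextAngle hmono hlast k) (hturn k) hnext hlt
  have hself : cross (dir (Φ i)) (V i) = -1 := cross_dir_tangentVertex_self _ _
  rw [hedge, cross_smul_sub, hself, ← hdir]
  exact mul_pos (add_pos (htan i) (htan (i - 1))) (by linarith)

end Polygon

section Lift

def liftAngle {n : ℕ} (θ : Fin n → ℝ) (j : ℕ) (i : Fin n) : ℝ :=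
  if (i : ℕ) < j then θ i else θ i + π

lemma liftAngle_of_lt {n : ℕ} {θ : Fin n → ℝ} {j : ℕ} {i : Fin n} (hi : (i : ℕ) < j) :
    liftAngle θ j i = θ i :=
  if_pos hi

lemma liftAngle_of_le {n : ℕ} {θ : Fin n → ℝ} {j : ℕ} {i : Fin n} (hi : j ≤ (i : ℕ)) :
    liftAngle θ j i = θ i + π :=
  if_neg (not_lt.2 hi)

lemma liftAngle_mem_Ico {n : ℕ} {θ : Fin n → ℝ} (hθ : ∀ i, θ i ∈ Set.Ico 0 π) (j : ℕ)
    (i : Fin n) : liftAngle θ j i ∈ Set.Ico 0 (2 * π) := by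
  obtain ⟨h0, hπ⟩ := hθ i
  unfold liftAngle
  split_ifs <;> constructor <;> linarith [pi_pos]

lemma exists_dir_liftAngle_eq_smul {n : ℕ} (θ : Fin n → ℝ) (j : ℕ) (i : Fin n) :
    ∃ s : ℝ, s ≠ 0 ∧ dir (liftAngle θ j i) = s • dir (θ i) := by
  unfold liftAngle
  split_ifs
  · exact ⟨1, one_ne_zero, (one_smul ℝ _).symm⟩
  · exact ⟨-1, by norm_num, by rw [dir_add_pi, neg_one_smul]⟩

lemma strictMono_liftAngle {n : ℕ} {θ : Fin n → ℝ} {j : ℕ} (hθ : ∀ i, θ i ∈ Set.Ico 0 π)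
    (hrun1 : ∀ s t : Fin n, (s : ℕ) < (t : ℕ) → (t : ℕ) < j → θ s < θ t)
    (hrun2 : ∀ s t : Fin n, j ≤ (s : ℕ) → (s : ℕ) < (t : ℕ) → θ s < θ t) :
    StrictMono (liftAngle θ j) := by
  intro s t hst
  rw [Fin.lt_def] at hst
  have hs := hθ s
  have ht := hθ t
  unfold liftAngle
  split_ifs with hsj htj htj
  · exact hrun1 s t hst htj
  · linarith [hs.2, ht.1]
  · omega
  · linarith [hrun2 s t (not_lt.1 hsj) hst]

lemma nextAngle_liftAngle_lt {m : ℕ} {θ : Fin (m + 1) → ℝ} {j : ℕ}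
    (hθ : ∀ i, θ i ∈ Set.Ico 0 π) (hinj : Function.Injective θ) (hmin : ∀ i, θ 0 ≤ θ i)
    (h1 : 1 ≤ j) (h2 : j < m + 1) (hjump : θ ⟨j, h2⟩ < θ ⟨j - 1, by omega⟩)
    (k : Fin (m + 1)) : nextAngle (liftAngle θ j) k < liftAngle θ j k + π := by
  obtain ⟨hk0, hk0'⟩ := hθ k
  by_cases hk : k = Fin.last m
  · have hm : Fin.last m ≠ 0 := by
      rw [Ne, Fin.ext_iff, Fin.val_last, Fin.val_zero]
      omega
    have hθlast : θ 0 < θ (Fin.last m) := lt_of_le_of_ne (hmin _) (hinj.ne hm.symm)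
    rw [hk, nextAngle_last, liftAngle_of_lt (by rw [Fin.val_zero]; omega),
      liftAngle_of_le (by rw [Fin.val_last]; omega)]
    linarith
  have hval : ((k + 1 : Fin (m + 1)) : ℕ) = k + 1 :=
    Fin.val_add_one_of_lt (lt_of_le_of_ne (Fin.le_last k) hk)
  obtain ⟨hk1, hk1'⟩ := hθ (k + 1)
  rw [nextAngle_of_ne_last _ hk]
  rcases lt_trichotomy ((k : ℕ) + 1) j with hlt | heq | hgt
  · rw [liftAngle_of_lt (by omega), liftAngle_of_lt (by omega)]
    linarith
  · have e1 : k + 1 = ⟨j, h2⟩ := Fin.ext (show ((k + 1 : Fin (m + 1)) : ℕ) = j by omega)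
    have e2 : k = ⟨j - 1, by omega⟩ := Fin.ext (show (k : ℕ) = j - 1 by omega)
    rw [liftAngle_of_le (by omega), liftAngle_of_lt (by omega), e1, e2]
    linarith
  · rw [liftAngle_of_le (by omega), liftAngle_of_le (by omega)]
    linarith

end Lift

end

end TangentPolygon

open TangentPolygon

theorem gonality_of_two_standard_consecutive_structure_general
    (n : ℕ) [NeZero n] (θ : Fin n → ℝ)
    (hθrange : ∀ i : Fin n, θ i ∈ Set.Ico 0 Real.pi)
    (hinj : Function.Injective θ)
    (hmin : ∀ i : Fin n, θ 0 ≤ θ i)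
    (j : ℕ) (h1 : 1 ≤ j) (h2 : j < n)
    (hrun1 : ∀ s t : Fin n, (s : ℕ) < (t : ℕ) → (t : ℕ) < j → θ s < θ t)
    (hrun2 : ∀ s t : Fin n, j ≤ (s : ℕ) → (s : ℕ) < (t : ℕ) → θ s < θ t)
    (hjump : θ ⟨j, h2⟩ < θ ⟨j - 1, lt_of_le_of_lt (Nat.sub_le j 1) h2⟩) :
    ∃ V : Fin n → ℝ × ℝ,
      (∀ i k : Fin n, k ≠ i - 1 → k ≠ i →
        0 < (V i - V (i - 1)).1 * (V k - V i).2 - (V i - V (i - 1)).2 * (V k - V i).1) ∧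
      (∀ i : Fin n, ∃ r : ℝ, r ≠ 0 ∧
        V i - V (i - 1) = r • (Real.cos (θ i), Real.sin (θ i))) := by
  obtain ⟨m, rfl⟩ : ∃ m, n = m + 1 := ⟨n - 1, by omega⟩
  have hlast : liftAngle θ j (Fin.last m) < liftAngle θ j 0 + 2 * π := by
    linarith [(liftAngle_mem_Ico hθrange j (Fin.last m)).2, (liftAngle_mem_Ico hθrange j 0).1]
  obtain ⟨V, hconvex, hedge⟩ := exists_convex_polygon (strictMono_liftAngle hθrange hrun1 hrun2)
    hlast (nextAngle_liftAngle_lt hθrange hinj hmin h1 h2 hjump)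
  refine ⟨V, hconvex, fun i => ?_⟩
  obtain ⟨r, hr, he⟩ := hedge i
  obtain ⟨s, hs, hdir⟩ := exists_dir_liftAngle_eq_smul θ j i
  exact ⟨r * s, mul_ne_zero hr.ne' hs, by rw [he, hdir, smul_smul]; rfl⟩

/-- Any prescribed `2`-standard consecutive slope pattern respecting the slope property
is realized by an anticlockwise `n`-gonality: given pairwise distinct angles
`θ i ∈ [0, π)` with `θ 0` minimal, split into two increasing runs (0-based indices
`0, …, j-1` and `j, …, n-1`) with `θ j < θ (j-1)`, there are points `V 0, …, V (n-1)`
in strictly convex, positively oriented position whose edge `V i - V (i-1)` is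
parallel to `(cos (θ i), sin (θ i))` for each `i`. -/
theorem gonality_of_two_standard_consecutive_structure
    (n : ℕ) [NeZero n] (hn : 3 ≤ n) (θ : Fin n → ℝ)
    (hθrange : ∀ i : Fin n, θ i ∈ Set.Ico 0 Real.pi)
    (hinj : Function.Injective θ)
    (hmin : ∀ i : Fin n, θ 0 ≤ θ i)
    (j : ℕ) (h1 : 1 ≤ j) (h2 : j < n)
    (hrun1 : ∀ s t : Fin n, (s : ℕ) < (t : ℕ) → (t : ℕ) < j → θ s < θ t)
    (hrun2 : ∀ s t : Fin n, j ≤ (s : ℕ) → (s : ℕ) < (t : ℕ) → θ s < θ t)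
    (hjump : θ ⟨j, h2⟩ < θ ⟨j - 1, lt_of_le_of_lt (Nat.sub_le j 1) h2⟩) :
    ∃ V : Fin n → ℝ × ℝ,
      (∀ i k : Fin n, k ≠ i - 1 → k ≠ i →
        0 < (V i - V (i - 1)).1 * (V k - V i).2 - (V i - V (i - 1)).2 * (V k - V i).1) ∧
      (∀ i : Fin n, ∃ r : ℝ, r ≠ 0 ∧
        V i - V (i - 1) = r • (Real.cos (θ i), Real.sin (θ i))) :=
  gonality_of_two_standard_consecutive_structure_general n θ hθrange hinj hmin j h1 h2 hrun1 hrun2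
    hjump
end

section
/- Let F be a linearly ordered field, n ≥ 3, and let L_1, …, L_n be a line arrangement in F² given by affine functions f_i. With indices modulo n, let V_i = L_i ∩ L_{i+1}, and suppose that for each i there is a sign ε_i ∈ {−1, +1} such that ε_i · f_i(V_k) > 0 for every k ∉ {i−1, i} (so the lines form a global n-gonality). Then every unbounded region R_δ of the arrangement satisfies #E(δ) ≤ 4; that is, when there is global cyclicity there are no unbounded gonalities higher than unbounded 4-gonalities. -/
/-- The open region of the arrangement associated to the sign vector `δ`
(`true ↦ +1`, `false ↦ -1`). -/
def arrRegion {F : Type*} [Field F] [LinearOrder F] [IsStrictOrderedRing F] {n : ℕ} (a b c : Fin n → F)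
    (δ : Fin n → Bool) : Set (F × F) :=
  {p : F × F | ∀ i : Fin n, 0 < (if δ i then (1 : F) else -1) * arrLine a b c i p}

/-- A subset of the plane is unbounded if it contains a ray. -/
def arrUnbounded {F : Type*} [Field F] [LinearOrder F] [IsStrictOrderedRing F] (R : Set (F × F)) : Prop :=
  ∃ v w : F × F, w ≠ 0 ∧ ∀ t : F, 0 ≤ t → v + t • w ∈ R

/-- The gonality `#E(δ)` of the region of the sign vector `δ`: the number of indices `i`
such that some point of the line `L i` satisfies all the other strict inequalities. -/
noncomputable def arrGonality {F : Type*} [Field F] [LinearOrder F] [IsStrictOrderedRing F] {n : ℕ}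
    (a b c : Fin n → F) (δ : Fin n → Bool) : ℕ :=
  Set.ncard {i : Fin n | ∃ p : F × F, arrLine a b c i p = 0 ∧
    ∀ j : Fin n, j ≠ i → 0 < (if δ j then (1 : F) else -1) * arrLine a b c j p}

/-!
Let `w` be a direction along which the region recedes, tilted to be parallel to none of the
lines. Then `x j = ε j * ℓ j w`, with `ℓ j` the linear part of `f j`, is positive exactly when
the region lies on the same side of `L j` as the polygon `V`. Writing `wedge w` at a vertex `V j`
in terms of `f j` and `f (j + 1)` shows that `V j` is a strict extremum of `wedge w` over all
vertices when `x j`, `x (j + 1)` have opposite signs, and not a maximum when they agree. Hence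
the cyclic sequence `x` changes sign, and at most twice. A point of an edge of the region on
`L i` is `V (i - 1) + τ • (V i - V (i - 1))`, and the signs of `f (i ± 1)` there show that
`x (i - 1)`, `x (i + 1)` are not both negative, and if both are positive then so is every `x j`
with `j ≠ i`. So every edge is next to a sign change of `x`, and there are at most four edges.
-/

namespace Fin

variable {n : ℕ} [NeZero n]

lemma add_one_ne_self_s5 (hn : 2 ≤ n) (i : Fin n) : i + 1 ≠ i := by
  have h : (1 : Fin n) ≠ 0 := by
    rw [Ne, Fin.ext_iff, Fin.val_one', Nat.one_mod_eq_one.mpr (by omega), Fin.val_zero]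
    omega
  simpa using h

lemma sub_one_ne_self_s5 (hn : 2 ≤ n) (i : Fin n) : i - 1 ≠ i := by
  intro h
  exact add_one_ne_self_s5 hn (i - 1) (by rw [sub_add_cancel, h])

lemma sub_one_ne_add_one_s5 (hn : 3 ≤ n) (i : Fin n) : i - 1 ≠ i + 1 := by
  have h : (1 : Fin n) + 1 ≠ 0 := by
    rw [Ne, Fin.ext_iff, Fin.val_add, Fin.val_one', Nat.one_mod_eq_one.mpr (by omega), Fin.val_zero,
      Nat.mod_eq_of_lt (by omega)]
    omega
  intro e
  apply h
  calc (1 : Fin n) + 1 = (i + 1) - (i - 1) := by abel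
    _ = 0 := by rw [e, sub_self]

end Fin

section Signs

lemma mul_pos_of_mul_pos_of_mul_pos {R : Type*} [CommRing R] [LinearOrder R] [IsStrictOrderedRing R]
    {a b y : R} (ha : 0 < a * y) (hb : 0 < b * y) : 0 < a * b :=
  pos_of_mul_pos_left (a := a * b) (b := y * y) (by linarith [mul_pos ha hb]) (mul_self_nonneg y)

variable {F : Type*} [Field F] [LinearOrder F] [IsStrictOrderedRing F]

lemma nonneg_of_forall_pos_add_mul {A B : F} (h : ∀ t : F, 0 ≤ t → 0 < A + t * B) :
    0 ≤ B := by
  by_contra! hB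
  have hA : 0 < A := by simpa using h 0 le_rfl
  have := h (A / -B) (div_nonneg hA.le (by linarith))
  rw [div_mul_eq_mul_div, div_neg, mul_div_assoc, div_self hB.ne, mul_one] at this
  linarith

lemma eventually_pos_mul_add {p q : F} (hp : 0 ≤ p) (hq : p = 0 → 0 < q) :
    ∀ᶠ t in Filter.atTop, 0 < t * p + q := by
  rcases hp.eq_or_lt with hp | hp
  · exact Filter.Eventually.of_forall fun t => by simpa [← hp] using hq hp.symm
  · exact (Filter.tendsto_atTop_add_const_right _ q
      (Filter.tendsto_id.atTop_mul_const hp)).eventually_gt_atTop 0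

end Signs

def IsStrictExtr {ι β : Type*} [Preorder β] (h : ι → β) (j : ι) : Prop :=
  (∀ k ≠ j, h k < h j) ∨ ∀ k ≠ j, h j < h k

lemma IsStrictExtr.of_forall_pos_mul {ι R : Type*} [Ring R] [LinearOrder R] [IsStrictOrderedRing R]
    {h : ι → R} {j : ι} {c : R} (H : ∀ k ≠ j, 0 < c * (h k - h j)) : IsStrictExtr h j := by
  rcases le_total c 0 with hc | hc
  · exact Or.inl fun k hk => sub_neg.mp (neg_of_mul_pos_right (H k hk) hc)
  · exact Or.inr fun k hk => sub_pos.mp (pos_of_mul_pos_right (H k hk) hc)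

lemma ncard_setOf_isStrictExtr_le_two {ι β : Type*} [Preorder β] (h : ι → β) :
    {j | IsStrictExtr h j}.ncard ≤ 2 := by
  have hmax : {j | ∀ k ≠ j, h k < h j}.Subsingleton := fun j hj k hk => by
    by_contra hne
    exact lt_asymm (hj k (Ne.symm hne)) (hk j hne)
  have hmin : {j | ∀ k ≠ j, h j < h k}.Subsingleton := fun j hj k hk => by
    by_contra hne
    exact lt_asymm (hj k (Ne.symm hne)) (hk j hne)
  calc {j | IsStrictExtr h j}.ncard
      = ({j | ∀ k ≠ j, h k < h j} ∪ {j | ∀ k ≠ j, h j < h k}).ncard := rfl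
    _ ≤ 1 + 1 := (Set.ncard_union_le _ _).trans (add_le_add
        ((Set.ncard_le_one hmax.finite).mpr fun _ ha _ hb => hmax ha hb)
        ((Set.ncard_le_one hmin.finite).mpr fun _ ha _ hb => hmin ha hb))

lemma ncard_le_four_of_sign_changes {R : Type*} [Ring R] [LinearOrder R] [IsStrictOrderedRing R]
    {n : ℕ} [NeZero n] {x : Fin n → R} {E : Set (Fin n)} (hx : ∀ j, x j ≠ 0)
    (hE₁ : ∀ i ∈ E, 0 < x (i - 1) ∨ 0 < x (i + 1))
    (hE₂ : ∀ i ∈ E, 0 < x (i - 1) → 0 < x (i + 1) → ∀ j ≠ i, 0 < x j)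
    (hchange : ∃ j, x j * x (j + 1) < 0) (hC : {j | x j * x (j + 1) < 0}.ncard ≤ 2) :
    E.ncard ≤ 4 := by
  set C := {j | x j * x (j + 1) < 0}
  have hsub : E ⊆ C ∪ (· + 1) '' C := by
    intro i hi
    by_cases h₁ : x (i - 1) * x i < 0
    · refine Or.inr ⟨i - 1, ?_, sub_add_cancel i 1⟩
      show x (i - 1) * x (i - 1 + 1) < 0
      rwa [sub_add_cancel]
    by_cases h₂ : x i * x (i + 1) < 0
    · exact Or.inl h₂
    exfalso
    have h₁ : 0 < x (i - 1) * x i := (not_lt.mp h₁).lt_of_ne (mul_ne_zero (hx _) (hx _)).symm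
    have h₂ : 0 < x i * x (i + 1) := (not_lt.mp h₂).lt_of_ne (mul_ne_zero (hx _) (hx _)).symm
    have hi₀ : 0 < x i := by
      rcases hE₁ i hi with h | h
      · exact pos_of_mul_pos_right h₁ h.le
      · exact pos_of_mul_pos_left h₂ h.le
    have hall : ∀ j, 0 < x j := fun j => by
      rcases eq_or_ne j i with rfl | hj
      · exact hi₀
      · exact hE₂ i hi (pos_of_mul_pos_left h₁ hi₀.le) (pos_of_mul_pos_right h₂ hi₀.le) j
          hj
    obtain ⟨j, hj⟩ := hchange
    exact (mul_pos (hall j) (hall (j + 1))).not_gt hj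
  calc E.ncard ≤ (C ∪ (· + 1) '' C).ncard := Set.ncard_le_ncard hsub (Set.toFinite _)
    _ ≤ C.ncard + ((· + 1) '' C).ncard := Set.ncard_union_le _ _
    _ ≤ C.ncard + C.ncard := Nat.add_le_add_left (Set.ncard_image_le (Set.toFinite C)) _
    _ ≤ 4 := by omega

section Linear

variable {R : Type*} [CommRing R] {n : ℕ}

def arrLinear (a b : Fin n → R) (i : Fin n) (w : R × R) : R :=
  a i * w.1 + b i * w.2

def wedge (u v : R × R) : R :=
  u.1 * v.2 - u.2 * v.1

def inwardRate (ε a b : Fin n → R) (w : R × R) (j : Fin n) : R :=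
  ε j * arrLinear a b j w

variable {a b : Fin n → R}

lemma arrLinear_mul_sub_mul (i j : Fin n) (w u : R × R) :
    arrLinear a b i w * arrLinear a b j u - arrLinear a b j w * arrLinear a b i u =
      (a i * b j - a j * b i) * wedge w u := by
  simp only [arrLinear, wedge]
  ring

lemma eq_zero_of_arrLinear_eq_zero [NoZeroDivisors R]
    (hpar : ∀ i j : Fin n, i ≠ j → a i * b j ≠ a j * b i)
    {i j : Fin n} (hij : i ≠ j) {u : R × R} (hi : arrLinear a b i u = 0)
    (hj : arrLinear a b j u = 0) : u = 0 := by
  have hD : a i * b j - a j * b i ≠ 0 := sub_ne_zero.mpr (hpar i j hij)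
  simp only [arrLinear] at hi hj
  ext
  · exact (mul_eq_zero.mp (by linear_combination b j * hi - b i * hj :
      (a i * b j - a j * b i) * u.1 = 0)).resolve_left hD
  · exact (mul_eq_zero.mp (by linear_combination a i * hj - a j * hi :
      (a i * b j - a j * b i) * u.2 = 0)).resolve_left hD

end Linear

section Arrangement

variable {F : Type*} [Field F] [LinearOrder F] [IsStrictOrderedRing F] {n : ℕ}
  {a b c : Fin n → F}

lemma arrLine_add_smul (i : Fin n) (p w : F × F) (t : F) :
    arrLine a b c i (p + t • w) = arrLine a b c i p + t * arrLinear a b i w := by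
  simp only [arrLine, arrLinear, Prod.fst_add, Prod.snd_add, Prod.smul_fst, Prod.smul_snd,
    smul_eq_mul]
  ring

lemma arrLine_sub_arrLine (i : Fin n) (p q : F × F) :
    arrLine a b c i p - arrLine a b c i q = arrLinear a b i (p - q) := by
  simp only [arrLine, arrLinear, Prod.fst_sub, Prod.snd_sub]
  ring

lemma arrLine_add_smul_sub (i : Fin n) (p q : F × F) (τ : F) :
    arrLine a b c i (p + τ • (q - p)) =
      (1 - τ) * arrLine a b c i p + τ * arrLine a b c i q := by
  simp only [arrLine, Prod.fst_add, Prod.snd_add, Prod.smul_fst, Prod.smul_snd, Prod.fst_sub,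
    Prod.snd_sub, smul_eq_mul]
  ring

structure IsGlobalGonality [NeZero n] (a b c : Fin n → F) (V : Fin n → F × F)
    (ε : Fin n → F) : Prop where
  vertex_mem : ∀ i, arrLine a b c i (V i) = 0 ∧ arrLine a b c (i + 1) (V i) = 0
  side_pos : ∀ i k, k ≠ i - 1 → k ≠ i → 0 < ε i * arrLine a b c i (V k)

end Arrangement

section Recession

variable {F : Type*} [Field F] [LinearOrder F] [IsStrictOrderedRing F] {n : ℕ} {a b : Fin n → F}

lemma exists_forall_pos_arrLinear (hnd : ∀ i : Fin n, (a i, b i) ≠ (0, 0))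
    (hpar : ∀ i j : Fin n, i ≠ j → a i * b j ≠ a j * b i) {s : Fin n → F}
    (hs : ∀ i, s i ≠ 0) {w₀ : F × F} (hw₀ : w₀ ≠ 0)
    (h : ∀ i, 0 ≤ s i * arrLinear a b i w₀) :
    ∃ w, ∀ i, 0 < s i * arrLinear a b i w := by
  by_cases hall : ∀ i, arrLinear a b i w₀ ≠ 0
  · exact ⟨w₀, fun i => (h i).lt_of_ne (mul_ne_zero (hs i) (hall i)).symm⟩
  obtain ⟨i₀, hi₀⟩ : ∃ i₀, arrLinear a b i₀ w₀ = 0 := by simpa using hall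
  -- `w₀` is parallel to `L i₀` only, so tilting it slightly towards a normal of `L i₀` works
  set z : F × F := s i₀ • (a i₀, b i₀)
  have key : ∀ i, ∀ᶠ t : F in Filter.atTop, 0 < s i * arrLinear a b i (t • w₀ + z) := by
    intro i
    have hlin : ∀ t : F, s i * arrLinear a b i (t • w₀ + z) =
        t * (s i * arrLinear a b i w₀) + s i * arrLinear a b i z := fun t => by
      simp only [arrLinear, Prod.fst_add, Prod.snd_add, Prod.smul_fst, Prod.smul_snd, smul_eq_mul]
      ring
    simp_rw [hlin]
    refine eventually_pos_mul_add (h i) fun h0 => ?_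
    obtain rfl : i = i₀ := by
      by_contra hne
      exact hw₀ (eq_zero_of_arrLinear_eq_zero hpar hne
        ((mul_eq_zero.mp h0).resolve_left (hs i)) hi₀)
    have hab : a i * a i + b i * b i ≠ 0 := fun h0 => by
      obtain ⟨ha, hb⟩ := mul_self_add_mul_self_eq_zero.mp h0
      exact hnd i (by rw [ha, hb])
    have : s i * arrLinear a b i z = s i * s i * (a i * a i + b i * b i) := by
      simp only [z, arrLinear, Prod.smul_fst, Prod.smul_snd, smul_eq_mul]
      ring
    rw [this]
    exact mul_pos (mul_self_pos.mpr (hs i)) ((add_nonneg (mul_self_nonneg _)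
      (mul_self_nonneg _)).lt_of_ne hab.symm)
  obtain ⟨t, ht⟩ := (Filter.eventually_all.mpr key).exists
  exact ⟨t • w₀ + z, ht⟩

end Recession

namespace IsGlobalGonality

variable {F : Type*} [Field F] [LinearOrder F] [IsStrictOrderedRing F] {n : ℕ} [NeZero n]
  {a b c : Fin n → F} {V : Fin n → F × F} {ε : Fin n → F}

lemma arrLine_pred (hG : IsGlobalGonality a b c V ε) (i : Fin n) :
    arrLine a b c i (V (i - 1)) = 0 := by
  simpa using (hG.vertex_mem (i - 1)).2

lemma side_nonneg (hG : IsGlobalGonality a b c V ε) (i k : Fin n) :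
    0 ≤ ε i * arrLine a b c i (V k) := by
  by_cases h₁ : k = i - 1
  · simp [h₁, hG.arrLine_pred]
  by_cases h₂ : k = i
  · simp [h₂, (hG.vertex_mem i).1]
  exact (hG.side_pos i k h₁ h₂).le

lemma mul_wedge_sub (hG : IsGlobalGonality a b c V ε) (j k : Fin n) (w : F × F) :
    ε j * ε (j + 1) * (a j * b (j + 1) - a (j + 1) * b j) * (wedge w (V k) - wedge w (V j)) =
      inwardRate ε a b w j * (ε (j + 1) * arrLine a b c (j + 1) (V k)) -
        inwardRate ε a b w (j + 1) * (ε j * arrLine a b c j (V k)) := by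
  have h₁ : arrLine a b c j (V k) = arrLinear a b j (V k - V j) := by
    rw [← arrLine_sub_arrLine, (hG.vertex_mem j).1, sub_zero]
  have h₂ : arrLine a b c (j + 1) (V k) = arrLinear a b (j + 1) (V k - V j) := by
    rw [← arrLine_sub_arrLine, (hG.vertex_mem j).2, sub_zero]
  -- `u ↦ ℓ j w * ℓ (j + 1) u - ℓ (j + 1) w * ℓ j u` vanishes at `w`, so is a multiple of
  -- `wedge w`
  have h₃ := arrLinear_mul_sub_mul (a := a) (b := b) j (j + 1) w (V k - V j)
  rw [h₁, h₂, inwardRate, inwardRate]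
  simp only [wedge, Prod.fst_sub, Prod.snd_sub] at h₃ ⊢
  linear_combination (-(ε j * ε (j + 1))) * h₃

lemma isStrictExtr_of_mul_neg (hG : IsGlobalGonality a b c V ε) (hn : 3 ≤ n) {w : F × F}
    {j : Fin n} (h : inwardRate ε a b w j * inwardRate ε a b w (j + 1) < 0) :
    IsStrictExtr (fun k => wedge w (V k)) j := by
  refine IsStrictExtr.of_forall_pos_mul (c := inwardRate ε a b w j *
    (ε j * ε (j + 1) * (a j * b (j + 1) - a (j + 1) * b j))) fun k hk => ?_
  rw [mul_assoc, hG.mul_wedge_sub]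
  have hx := left_ne_zero_of_mul h.ne
  have hF := hG.side_nonneg j k
  have hF' := hG.side_nonneg (j + 1) k
  have hpos :
      0 < ε j * arrLine a b c j (V k) ∨ 0 < ε (j + 1) * arrLine a b c (j + 1) (V k) := by
    by_cases hk' : k = j - 1
    · subst hk'
      refine Or.inr (hG.side_pos (j + 1) (j - 1) ?_ (Fin.sub_one_ne_add_one_s5 hn j))
      rw [add_sub_cancel_right]
      exact Fin.sub_one_ne_self_s5 (by omega) j
    · exact Or.inl (hG.side_pos j k hk' hk)
  rcases hpos with hpos | hpos <;> nlinarith [mul_self_pos.mpr hx]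

lemma sub_mul_sub_neg_of_mul_pos (hG : IsGlobalGonality a b c V ε) (hn : 3 ≤ n) {w : F × F}
    {j : Fin n} (h : 0 < inwardRate ε a b w j * inwardRate ε a b w (j + 1)) :
    (wedge w (V (j - 1)) - wedge w (V j)) * (wedge w (V (j + 1)) - wedge w (V j)) < 0 := by
  have h₁ := hG.mul_wedge_sub j (j - 1) w
  have h₂ := hG.mul_wedge_sub j (j + 1) w
  rw [hG.arrLine_pred, mul_zero, mul_zero, sub_zero] at h₁
  rw [(hG.vertex_mem (j + 1)).1, mul_zero, mul_zero, zero_sub] at h₂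
  set κ := ε j * ε (j + 1) * (a j * b (j + 1) - a (j + 1) * b j)
  have hpos₁ : 0 < ε (j + 1) * arrLine a b c (j + 1) (V (j - 1)) := by
    refine hG.side_pos (j + 1) (j - 1) ?_ (Fin.sub_one_ne_add_one_s5 hn j)
    rw [add_sub_cancel_right]
    exact Fin.sub_one_ne_self_s5 (by omega) j
  have hpos₂ : 0 < ε j * arrLine a b c j (V (j + 1)) :=
    hG.side_pos j (j + 1) (Fin.sub_one_ne_add_one_s5 hn j).symm (Fin.add_one_ne_self_s5 (by omega) j)
  refine neg_of_mul_neg_right (a := κ * κ) ?_ (mul_self_nonneg κ)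
  calc κ * κ * ((wedge w (V (j - 1)) - wedge w (V j)) * (wedge w (V (j + 1)) - wedge w (V j)))
      = -(inwardRate ε a b w j * inwardRate ε a b w (j + 1) *
          (ε (j + 1) * arrLine a b c (j + 1) (V (j - 1)) *
            (ε j * arrLine a b c j (V (j + 1))))) := by
        linear_combination
          (κ * (wedge w (V (j + 1)) - wedge w (V j))) * h₁ +
          (inwardRate ε a b w j * (ε (j + 1) * arrLine a b c (j + 1) (V (j - 1)))) * h₂
    _ < 0 := neg_neg_of_pos (mul_pos h (mul_pos hpos₁ hpos₂))

lemma exists_mul_neg (hG : IsGlobalGonality a b c V ε) (hn : 3 ≤ n) {w : F × F}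
    (hx : ∀ j, inwardRate ε a b w j ≠ 0) :
    ∃ j, inwardRate ε a b w j * inwardRate ε a b w (j + 1) < 0 := by
  obtain ⟨j, hj⟩ := Finite.exists_max fun k => wedge w (V k)
  refine ⟨j, (mul_ne_zero (hx j) (hx (j + 1))).lt_or_gt.resolve_right fun hpos => ?_⟩
  exact (hG.sub_mul_sub_neg_of_mul_pos hn hpos).not_ge
    (mul_nonneg_of_nonpos_of_nonpos (sub_nonpos.mpr (hj _)) (sub_nonpos.mpr (hj _)))

lemma ncard_mul_neg_le_two (hG : IsGlobalGonality a b c V ε) (hn : 3 ≤ n) (w : F × F) :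
    {j | inwardRate ε a b w j * inwardRate ε a b w (j + 1) < 0}.ncard ≤ 2 :=
  (Set.ncard_le_ncard (fun _ hj => hG.isStrictExtr_of_mul_neg hn hj) (Set.toFinite _)).trans
    (ncard_setOf_isStrictExtr_le_two _)

lemma exists_eq_add_smul_of_arrLine_eq_zero (hG : IsGlobalGonality a b c V ε) (hn : 3 ≤ n)
    (hpar : ∀ i j : Fin n, i ≠ j → a i * b j ≠ a j * b i) {i : Fin n} {p : F × F}
    (hp : arrLine a b c i p = 0) : ∃ τ : F, p = V (i - 1) + τ • (V i - V (i - 1)) := by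
  have hy : arrLine a b c (i - 1) (V i) ≠ 0 := by
    have hi : i ≠ i - 1 - 1 := by
      simpa using (Fin.sub_one_ne_add_one_s5 hn (i - 1)).symm
    exact right_ne_zero_of_mul
      (hG.side_pos (i - 1) i hi (Fin.sub_one_ne_self_s5 (by omega) i).symm).ne'
  refine ⟨arrLine a b c (i - 1) p / arrLine a b c (i - 1) (V i), ?_⟩
  rw [← sub_eq_zero]
  apply eq_zero_of_arrLinear_eq_zero hpar (Fin.sub_one_ne_self_s5 (by omega) i).symm
  · rw [← arrLine_sub_arrLine (c := c), arrLine_add_smul_sub, hp, hG.arrLine_pred,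
      (hG.vertex_mem i).1]
    ring
  · rw [← arrLine_sub_arrLine (c := c), arrLine_add_smul_sub, (hG.vertex_mem (i - 1)).1]
    field_simp
    ring

lemma exists_edge_param (hG : IsGlobalGonality a b c V ε) (hn : 3 ≤ n)
    (hpar : ∀ i j : Fin n, i ≠ j → a i * b j ≠ a j * b i) {s : Fin n → F} {i : Fin n}
    {p : F × F} (hp : arrLine a b c i p = 0) (hreg : ∀ j ≠ i, 0 < s j * arrLine a b c j p) :
    ∃ τ : F, p = V (i - 1) + τ • (V i - V (i - 1)) ∧
      0 < s (i - 1) * ε (i - 1) * τ ∧ 0 < s (i + 1) * ε (i + 1) * (1 - τ) := by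
  obtain ⟨τ, rfl⟩ := hG.exists_eq_add_smul_of_arrLine_eq_zero hn hpar hp
  refine ⟨τ, rfl, ?_, ?_⟩
  · have h₁ := hreg (i - 1) (Fin.sub_one_ne_self_s5 (by omega) i)
    have h₂ : 0 < ε (i - 1) * arrLine a b c (i - 1) (V i) := by
      refine hG.side_pos (i - 1) i ?_ (Fin.sub_one_ne_self_s5 (by omega) i).symm
      simpa using (Fin.sub_one_ne_add_one_s5 hn (i - 1)).symm
    rw [arrLine_add_smul_sub, (hG.vertex_mem (i - 1)).1] at h₁
    have := mul_pos_of_mul_pos_of_mul_pos (a := s (i - 1) * τ) (by linarith) h₂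
    linarith
  · have h₁ := hreg (i + 1) (Fin.add_one_ne_self_s5 (by omega) i)
    have h₂ : 0 < ε (i + 1) * arrLine a b c (i + 1) (V (i - 1)) := by
      refine hG.side_pos (i + 1) (i - 1) ?_ (Fin.sub_one_ne_add_one_s5 hn i)
      simpa using Fin.sub_one_ne_self_s5 (by omega) i
    rw [arrLine_add_smul_sub, (hG.vertex_mem i).2] at h₁
    have := mul_pos_of_mul_pos_of_mul_pos (a := s (i + 1) * (1 - τ)) (by linarith) h₂
    linarith

lemma edge_pos_or_pos (hG : IsGlobalGonality a b c V ε) (hn : 3 ≤ n)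
    (hpar : ∀ i j : Fin n, i ≠ j → a i * b j ≠ a j * b i) {s : Fin n → F} {i : Fin n}
    {p : F × F} (hp : arrLine a b c i p = 0) (hreg : ∀ j ≠ i, 0 < s j * arrLine a b c j p) :
    0 < s (i - 1) * ε (i - 1) ∨ 0 < s (i + 1) * ε (i + 1) := by
  obtain ⟨τ, -, h₁, h₂⟩ := hG.exists_edge_param hn hpar hp hreg
  by_contra! h
  linarith [neg_of_mul_pos_right h₁ h.1, neg_of_mul_pos_right h₂ h.2]

lemma edge_forall_pos (hG : IsGlobalGonality a b c V ε) (hn : 3 ≤ n)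
    (hpar : ∀ i j : Fin n, i ≠ j → a i * b j ≠ a j * b i) {s : Fin n → F} {i : Fin n}
    {p : F × F} (hp : arrLine a b c i p = 0) (hreg : ∀ j ≠ i, 0 < s j * arrLine a b c j p)
    (h₁ : 0 < s (i - 1) * ε (i - 1)) (h₂ : 0 < s (i + 1) * ε (i + 1)) :
    ∀ j ≠ i, 0 < s j * ε j := by
  obtain ⟨τ, rfl, hτ₁, hτ₂⟩ := hG.exists_edge_param hn hpar hp hreg
  have hτ : 0 < τ := pos_of_mul_pos_right hτ₁ h₁.le
  have hτ' : 0 < 1 - τ := pos_of_mul_pos_right hτ₂ h₂.le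
  intro j hj
  rcases eq_or_ne j (i - 1) with rfl | hj'
  · exact h₁
  have hpos : 0 < ε j * arrLine a b c j (V (i - 1) + τ • (V i - V (i - 1))) := by
    have hA := hG.side_pos j (i - 1) (fun h => hj (sub_left_injective h).symm) hj'.symm
    have hB := hG.side_nonneg j i
    rw [arrLine_add_smul_sub]
    nlinarith
  exact mul_pos_of_mul_pos_of_mul_pos (hreg j hj) hpos

end IsGlobalGonality

theorem unbounded_gonalities_le_four_of_global_cyclicity_general
    {F : Type*} [Field F] [LinearOrder F] [IsStrictOrderedRing F] (n : ℕ) [NeZero n] (hn : 3 ≤ n)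
    (a b c : Fin n → F)
    (hnd : ∀ i : Fin n, (a i, b i) ≠ (0, 0))
    (hpar : ∀ i j : Fin n, i ≠ j → a i * b j ≠ a j * b i)
    (V : Fin n → F × F)
    (hV : ∀ i : Fin n, arrLine a b c i (V i) = 0 ∧ arrLine a b c (i + 1) (V i) = 0)
    (ε : Fin n → F) (hε : ∀ i : Fin n, ε i = 1 ∨ ε i = -1)
    (hside : ∀ i k : Fin n, k ≠ i - 1 → k ≠ i → 0 < ε i * arrLine a b c i (V k)) :
    ∀ δ : Fin n → Bool, (arrRegion a b c δ).Nonempty → arrUnbounded (arrRegion a b c δ) →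
      arrGonality a b c δ ≤ 4 := by
  rintro δ - ⟨v, w₀, hw₀, hray⟩
  have hG : IsGlobalGonality a b c V ε := ⟨hV, hside⟩
  let s : Fin n → F := fun j => if δ j then 1 else -1
  have hs : ∀ j, s j ≠ 0 := fun j => by by_cases hδ : δ j <;> simp [s, hδ]
  have hε₀ : ∀ j, ε j ≠ 0 := fun j => by rcases hε j with h | h <;> simp [h]
  obtain ⟨w, hw⟩ := exists_forall_pos_arrLinear hnd hpar hs hw₀ fun i =>
    nonneg_of_forall_pos_add_mul fun t ht => by
      have h : 0 < s i * arrLine a b c i (v + t • w₀) := hray t ht i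
      rwa [arrLine_add_smul, mul_add, mul_left_comm] at h
  have hx : ∀ j, inwardRate ε a b w j ≠ 0 := fun j =>
    mul_ne_zero (hε₀ j) (right_ne_zero_of_mul (hw j).ne')
  have hlink : ∀ j, 0 < s j * ε j ↔ 0 < inwardRate ε a b w j := fun j => by
    refine pos_iff_pos_of_mul_pos ?_
    have : s j * ε j * inwardRate ε a b w j = ε j * ε j * (s j * arrLinear a b j w) := by
      rw [inwardRate]; ring
    exact this ▸ mul_pos (mul_self_pos.mpr (hε₀ j)) (hw j)
  refine ncard_le_four_of_sign_changes hx (fun i ⟨p, hp, hreg⟩ => ?_)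
    (fun i ⟨p, hp, hreg⟩ => ?_) (hG.exists_mul_neg hn hx) (hG.ncard_mul_neg_le_two hn w)
  · simpa only [hlink] using hG.edge_pos_or_pos (s := s) hn hpar hp hreg
  · simpa only [hlink] using hG.edge_forall_pos (s := s) hn hpar hp hreg

/-- When a line arrangement has global cyclicity (the vertices `V i = L i ∩ L (i+1)`
form a global `n`-gonality), every unbounded region has gonality at most `4`: there are
no unbounded gonalities higher than unbounded `4`-gonalities. -/
theorem unbounded_gonalities_le_four_of_global_cyclicity
    {F : Type*} [Field F] [LinearOrder F] [IsStrictOrderedRing F] (n : ℕ) [NeZero n] (hn : 3 ≤ n)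
    (a b c : Fin n → F)
    (hnd : ∀ i : Fin n, (a i, b i) ≠ (0, 0))
    (hpar : ∀ i j : Fin n, i ≠ j → a i * b j ≠ a j * b i)
    (hconc : ∀ i j k : Fin n, i ≠ j → j ≠ k → i ≠ k →
      ¬ ∃ p : F × F, arrLine a b c i p = 0 ∧ arrLine a b c j p = 0 ∧ arrLine a b c k p = 0)
    (V : Fin n → F × F)
    (hV : ∀ i : Fin n, arrLine a b c i (V i) = 0 ∧ arrLine a b c (i + 1) (V i) = 0)
    (ε : Fin n → F) (hε : ∀ i : Fin n, ε i = 1 ∨ ε i = -1)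
    (hside : ∀ i k : Fin n, k ≠ i - 1 → k ≠ i → 0 < ε i * arrLine a b c i (V k)) :
    ∀ δ : Fin n → Bool, (arrRegion a b c δ).Nonempty → arrUnbounded (arrRegion a b c δ) →
      arrGonality a b c δ ≤ 4 :=
  unbounded_gonalities_le_four_of_global_cyclicity_general n hn a b c hnd hpar V hV ε hε hside
end

section
/- Let F be a linearly ordered field and let L_1, L_2, L_3, L_4 be four lines in F² in general position (no two parallel, no three concurrent). For i < j write P_{ij} = L_i ∩ L_j, so each line L_i contains exactly three of the six points P_{ij}. Then there is exactly one pair {i, j} such that P_{ij} lies strictly between the other two intersection points on L_i and also lies strictly between the other two intersection points on L_j. (Every quadrilateral structure has a unique nook point.) -/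
/-- `P i j` lies strictly between the other two intersection points on the line `L i`
(those are the `P i k` with `k ∉ {i, j}`). -/
def midOnLine {F : Type*} [Field F] [LinearOrder F] [IsStrictOrderedRing F]
    (P : Fin 4 → Fin 4 → F × F) (i j : Fin 4) : Prop :=
  ∀ k l : Fin 4, k ≠ l → k ≠ i → k ≠ j → l ≠ i → l ≠ j →
    ∃ t : F, 0 < t ∧ t < 1 ∧ P i j = (1 - t) • P i k + t • P i l

/-!
Rescale the four affine functionals by nonzero weights so that they sum to zero; this is
possible because no three of the lines are concurrent. Write `w i j` for the cross product of
the normals of lines `i` and `j`, and `{k, l}` for the complement of `{i, j}`. By Cramer's rule,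
`P i j` lies between `P i k` and `P i l` exactly when `w i k` and `w i l` have the same sign.
The matrix `w` is antisymmetric with zero row sums, so its signs orient the complete graph on
the four lines without sources or sinks, and `P i j` is a nook point exactly when the edge `ij`
is the unique out-edge of one end and the unique in-edge of the other. Such a tournament has two
vertices of out-degree `1` and two of out-degree `2`, and exactly one edge runs from the
former pair to the latter.
-/

def ExistsUniqueMutualPair {α : Type*} (R : α → α → Prop) : Prop :=
  ∃ i j, i ≠ j ∧ R i j ∧ R j i ∧
    ∀ i' j', i' ≠ j' → R i' j' → R j' i' → (i' = i ∧ j' = j) ∨ (i' = j ∧ j' = i)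

theorem ExistsUniqueMutualPair.congr {α : Type*} {R R' : α → α → Prop}
    (h : ExistsUniqueMutualPair R) (hRR' : ∀ i j, i ≠ j → (R i j ↔ R' i j)) :
    ExistsUniqueMutualPair R' := by
  obtain ⟨i, j, hij, hR, hR', huniq⟩ := h
  refine ⟨i, j, hij, (hRR' i j hij).1 hR, (hRR' j i hij.symm).1 hR', fun i' j' hij' h h' => ?_⟩
  exact huniq i' j' hij' ((hRR' i' j' hij').2 h) ((hRR' j' i' hij'.symm).2 h')

/-- When row `i` of `σ` is not constant, this says that `σ i j` is its odd entry. -/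
def IsOddOneOut {α β : Type*} (σ : α → α → β) (i j : α) : Prop :=
  ∀ k l, k ≠ l → k ≠ i → k ≠ j → l ≠ i → l ≠ j → σ i k = σ i l

theorem Fin.exists_compl_pair : ∀ i j : Fin 4, i ≠ j →
    ∃ k l, i ≠ k ∧ i ≠ l ∧ j ≠ k ∧ j ≠ l ∧ k ≠ l := by
  decide

theorem Fin.compl_pair_cases : ∀ {i j k l : Fin 4}, i ≠ j → i ≠ k → i ≠ l → j ≠ k → j ≠ l →
    k ≠ l → ∀ {k' l' : Fin 4}, k' ≠ l' → k' ≠ i → k' ≠ j → l' ≠ i → l' ≠ j →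
      (k' = k ∧ l' = l) ∨ (k' = l ∧ l' = k) := by
  decide

theorem Fin.sum_univ_four_of_ne {M : Type*} [AddCommMonoid M] (f : Fin 4 → M) {i j k l : Fin 4}
    (hij : i ≠ j) (hik : i ≠ k) (hil : i ≠ l) (hjk : j ≠ k) (hjl : j ≠ l) (hkl : k ≠ l) :
    ∑ m, f m = f i + f j + f k + f l := by
  have huniv : ({i, j, k, l} : Finset (Fin 4)) = Finset.univ := by
    revert i j k l; decide
  rw [← huniv, Finset.sum_insert (by simp [hij, hik, hil]), Finset.sum_insert (by simp [hjk, hjl]),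
    Finset.sum_pair hkl, add_assoc, add_assoc]

theorem isOddOneOut_iff {β : Type*} {σ : Fin 4 → Fin 4 → β} {i j k l : Fin 4}
    (hij : i ≠ j) (hik : i ≠ k) (hil : i ≠ l) (hjk : j ≠ k) (hjl : j ≠ l) (hkl : k ≠ l) :
    IsOddOneOut σ i j ↔ σ i k = σ i l := by
  refine ⟨fun h => h k l hkl hik.symm hjk.symm hil.symm hjl.symm,
    fun h k' l' hkl' hk'i hk'j hl'i hl'j => ?_⟩
  rcases Fin.compl_pair_cases hij hik hil hjk hjl hkl hkl' hk'i hk'j hl'i hl'j with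
    ⟨rfl, rfl⟩ | ⟨rfl, rfl⟩
  exacts [h, h.symm]

def tournament4 (b₀₁ b₀₂ b₀₃ b₁₂ b₁₃ b₂₃ : Bool) : Fin 4 → Fin 4 → Bool :=
  ![![false, b₀₁, b₀₂, b₀₃], ![!b₀₁, false, b₁₂, b₁₃], ![!b₀₂, !b₁₂, false, b₂₃],
    ![!b₀₃, !b₁₃, !b₂₃, false]]

set_option synthInstance.maxSize 2000 in
theorem existsUniqueMutualPair_tournament4 : ∀ b₀₁ b₀₂ b₀₃ b₁₂ b₁₃ b₂₃ : Bool,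
    (∀ i, ∃ j k, j ≠ i ∧ k ≠ i ∧ tournament4 b₀₁ b₀₂ b₀₃ b₁₂ b₁₃ b₂₃ i j = true ∧
      tournament4 b₀₁ b₀₂ b₀₃ b₁₂ b₁₃ b₂₃ i k = false) →
    ExistsUniqueMutualPair (IsOddOneOut (tournament4 b₀₁ b₀₂ b₀₃ b₁₂ b₁₃ b₂₃)) := by
  unfold ExistsUniqueMutualPair IsOddOneOut
  decide

theorem existsUniqueMutualPair_isOddOneOut (σ : Fin 4 → Fin 4 → Bool)
    (hanti : ∀ i j, i ≠ j → σ j i = !σ i j)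
    (hmixed : ∀ i, ∃ j k, j ≠ i ∧ k ≠ i ∧ σ i j = true ∧ σ i k = false) :
    ExistsUniqueMutualPair (IsOddOneOut σ) := by
  set τ := tournament4 (σ 0 1) (σ 0 2) (σ 0 3) (σ 1 2) (σ 1 3) (σ 2 3)
  have hστ : ∀ i k, i ≠ k → σ i k = τ i k := by
    intro i k hik
    fin_cases i <;> fin_cases k <;> first | exact absurd rfl hik | rfl | exact hanti _ _ (by decide)
  refine (existsUniqueMutualPair_tournament4 (σ 0 1) (σ 0 2) (σ 0 3) (σ 1 2) (σ 1 3) (σ 2 3)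
    fun i => ?_).congr fun i j hij => ?_
  · obtain ⟨j, k, hji, hki, hj, hk⟩ := hmixed i
    exact ⟨j, k, hji, hki, (hστ i j hji.symm).symm.trans hj, (hστ i k hki.symm).symm.trans hk⟩
  · obtain ⟨k, l, hik, hil, hjk, hjl, hkl⟩ := Fin.exists_compl_pair i j hij
    rw [isOddOneOut_iff hij hik hil hjk hjl hkl, isOddOneOut_iff hij hik hil hjk hjl hkl,
      hστ i k hik, hστ i l hil]

section Signs

variable {F : Type*} [Field F] [LinearOrder F] [IsStrictOrderedRing F]

theorem mul_pos_iff_of_ne_zero {x y : F} (hx : x ≠ 0) (hy : y ≠ 0) :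
    0 < x * y ↔ (0 < x ↔ 0 < y) := by
  rcases hx.lt_or_gt with hx | hx <;> rcases hy.lt_or_gt with hy | hy <;>
    simp [hx, hy, mul_pos_of_neg_of_neg, mul_neg_of_neg_of_pos, mul_neg_of_pos_of_neg,
      not_lt_of_gt]

/-- Zero row sums mean that the sign tournament has no source and no sink. -/
theorem existsUniqueMutualPair_sign (s : Fin 4 → Fin 4 → F) (hanti : ∀ i j, s j i = -s i j)
    (hne : ∀ i j, i ≠ j → s i j ≠ 0) (hsum : ∀ i, ∑ j, s i j = 0) :
    ExistsUniqueMutualPair (IsOddOneOut fun i j => decide (0 < s i j)) := by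
  refine existsUniqueMutualPair_isOddOneOut _ (fun i j hij => ?_) fun i => ?_
  · rcases (hne i j hij).lt_or_gt with h | h <;> simp [hanti i j, h, h.le]
  · have hdiag : s i i = 0 := by linarith [hanti i i]
    obtain ⟨m, hmi⟩ := exists_ne i
    have hex : ∃ m ∈ Finset.univ, s i m ≠ 0 := ⟨m, Finset.mem_univ m, hne i m hmi.symm⟩
    obtain ⟨j, -, hj⟩ := Finset.exists_pos_of_sum_zero_of_exists_nonzero _ (hsum i) hex
    obtain ⟨k, -, hk⟩ := Finset.exists_pos_of_sum_zero_of_exists_nonzero (fun k => -s i k)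
      (by rw [Finset.sum_neg_distrib, hsum i, neg_zero]) (by simpa using hex)
    refine ⟨j, k, ?_, ?_, by simpa using hj, by simpa using hk.le⟩
    · rintro rfl; exact hj.ne' hdiag
    · rintro rfl; simp [hdiag] at hk

end Signs

section Coefficients

variable {R ι : Type*} [CommRing R] (a b c : ι → R)

def normalCross (i j : ι) : R := a i * b j - a j * b i

def lineDet (i j k : ι) : R :=
  Matrix.det !![a i, b i, c i; a j, b j, c j; a k, b k, c k]

theorem normalCross_swap (i j : ι) : normalCross a b j i = -normalCross a b i j := by
  unfold normalCross; ring

theorem sum_normalCross_eq_zero [Fintype ι] (ha : ∑ m, a m = 0) (hb : ∑ m, b m = 0) (i : ι) :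
    ∑ j, normalCross a b i j = 0 := by
  simp only [normalCross, Finset.sum_sub_distrib, ← Finset.mul_sum, ← Finset.sum_mul, ha, hb]
  ring

variable {a b c}

theorem lineDet_eq_neg {i j k l : ι}
    (ha : a i + a j + a k + a l = 0) (hb : b i + b j + b k + b l = 0)
    (hc : c i + c j + c k + c l = 0) : lineDet a b c i j l = -lineDet a b c i j k := by
  simp [lineDet, Matrix.det_fin_three]
  linear_combination (b i * c j - b j * c i) * ha - (a i * c j - a j * c i) * hb +
    (a i * b j - a j * b i) * hc

theorem normalCross_mul_ne_zero [NoZeroDivisors R] {μ : ι → R} (hμ : ∀ m, μ m ≠ 0) {i j : ι}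
    (hij : a i * b j ≠ a j * b i) : normalCross (μ * a) (μ * b) i j ≠ 0 := by
  have h : normalCross (μ * a) (μ * b) i j = μ i * μ j * (a i * b j - a j * b i) := by
    simp only [normalCross, Pi.mul_apply]; ring
  rw [h]
  exact mul_ne_zero (mul_ne_zero (hμ i) (hμ j)) (sub_ne_zero.2 hij)

end Coefficients

section Lines

variable {F : Type*} [Field F] [LinearOrder F] [IsStrictOrderedRing F] {n : ℕ} {a b c : Fin n → F}

theorem arrLine_mul (μ : Fin n → F) (i : Fin n) (p : F × F) :
    arrLine (μ * a) (μ * b) (μ * c) i p = μ i * arrLine a b c i p := by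
  simp only [arrLine, Pi.mul_apply]; ring

theorem arrLine_smul_add_smul (i : Fin n) (t : F) (q r : F × F) :
    arrLine a b c i ((1 - t) • q + t • r) =
      (1 - t) * arrLine a b c i q + t * arrLine a b c i r := by
  simp only [arrLine, Prod.fst_add, Prod.snd_add, Prod.smul_fst, Prod.smul_snd, smul_eq_mul]
  ring

/-- Cramer's rule for the intersection point of lines `i` and `k`. -/
theorem normalCross_mul_arrLine {i j k : Fin n} {p : F × F} (hi : arrLine a b c i p = 0)
    (hk : arrLine a b c k p = 0) :
    normalCross a b i k * arrLine a b c j p = lineDet a b c i j k := by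
  simp only [arrLine] at hi hk
  simp [normalCross, lineDet, arrLine, Matrix.det_fin_three]
  linear_combination (a j * b k - a k * b j) * hi - (a j * b i - a i * b j) * hk

theorem eq_of_arrLine_eq_zero {i j : Fin n} (hij : normalCross a b i j ≠ 0) {p q : F × F}
    (hpi : arrLine a b c i p = 0) (hpj : arrLine a b c j p = 0)
    (hqi : arrLine a b c i q = 0) (hqj : arrLine a b c j q = 0) : p = q := by
  simp only [arrLine] at hpi hpj hqi hqj
  have h₁ : normalCross a b i j * (p.1 - q.1) = 0 := by
    unfold normalCross; linear_combination b j * hpi - b i * hpj - b j * hqi + b i * hqj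
  have h₂ : normalCross a b i j * (p.2 - q.2) = 0 := by
    unfold normalCross; linear_combination a i * hpj - a j * hpi + a j * hqi - a i * hqj
  exact Prod.ext (sub_eq_zero.1 ((mul_eq_zero.1 h₁).resolve_left hij))
    (sub_eq_zero.1 ((mul_eq_zero.1 h₂).resolve_left hij))

theorem exists_between_of_mul_neg {i j : Fin n} (hij : normalCross a b i j ≠ 0) {p q r : F × F}
    (hpi : arrLine a b c i p = 0) (hpj : arrLine a b c j p = 0)
    (hqi : arrLine a b c i q = 0) (hri : arrLine a b c i r = 0)
    (hneg : arrLine a b c j q * arrLine a b c j r < 0) :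
    ∃ t : F, 0 < t ∧ t < 1 ∧ p = (1 - t) • q + t • r := by
  set u := arrLine a b c j q
  set v := arrLine a b c j r
  have hu : 0 < u / (u - v) ∧ u / (u - v) < 1 := by
    rcases mul_neg_iff.1 hneg with ⟨hu, hv⟩ | ⟨hu, hv⟩
    · exact ⟨div_pos hu (by linarith), (div_lt_one (by linarith)).2 (by linarith)⟩
    · exact ⟨div_pos_of_neg_of_neg hu (by linarith),
        (div_lt_one_of_neg (by linarith)).2 (by linarith)⟩
  refine ⟨u / (u - v), hu.1, hu.2, eq_of_arrLine_eq_zero hij hpi hpj ?_ ?_⟩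
  · rw [arrLine_smul_add_smul, hqi, hri]; ring
  · have huv : u - v ≠ 0 := fun h => by simp [h] at hu
    rw [arrLine_smul_add_smul]; field_simp; ring

theorem mul_neg_of_between {j : Fin n} {p q r : F × F} {t : F} (ht₀ : 0 < t) (ht₁ : t < 1)
    (hp : p = (1 - t) • q + t • r) (hpj : arrLine a b c j p = 0)
    (hq : arrLine a b c j q ≠ 0) (hr : arrLine a b c j r ≠ 0) :
    arrLine a b c j q * arrLine a b c j r < 0 := by
  have hsum : (1 - t) * arrLine a b c j q + t * arrLine a b c j r = 0 := by
    rw [← arrLine_smul_add_smul, ← hp, hpj]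
  rcases hq.lt_or_gt with hq | hq <;> rcases hr.lt_or_gt with hr | hr <;> nlinarith

end Lines

section Quadrilateral

variable {F : Type*} [Field F] [LinearOrder F] [IsStrictOrderedRing F] {a b c : Fin 4 → F}

theorem midOnLine_iff_mul_neg
    (hpar : ∀ i j : Fin 4, i ≠ j → a i * b j ≠ a j * b i)
    (hconc : ∀ i j k : Fin 4, i ≠ j → j ≠ k → i ≠ k →
      ¬ ∃ p : F × F, arrLine a b c i p = 0 ∧ arrLine a b c j p = 0 ∧ arrLine a b c k p = 0)
    {P : Fin 4 → Fin 4 → F × F}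
    (hP : ∀ i j : Fin 4, i ≠ j → arrLine a b c i (P i j) = 0 ∧ arrLine a b c j (P i j) = 0)
    {i j k l : Fin 4} (hij : i ≠ j) (hik : i ≠ k) (hil : i ≠ l) (hjk : j ≠ k) (hjl : j ≠ l)
    (hkl : k ≠ l) :
    midOnLine P i j ↔ arrLine a b c j (P i k) * arrLine a b c j (P i l) < 0 := by
  have hoff : ∀ m, i ≠ m → j ≠ m → arrLine a b c j (P i m) ≠ 0 := fun m him hjm h =>
    hconc i m j him hjm.symm hij ⟨P i m, (hP i m him).1, (hP i m him).2, h⟩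
  have hcross : normalCross a b i j ≠ 0 := sub_ne_zero.2 (hpar i j hij)
  constructor
  · intro hmid
    obtain ⟨t, ht₀, ht₁, hp⟩ := hmid k l hkl hik.symm hjk.symm hil.symm hjl.symm
    exact mul_neg_of_between ht₀ ht₁ hp (hP i j hij).2 (hoff k hik hjk) (hoff l hil hjl)
  · intro hneg k' l' hkl' hk'i hk'j hl'i hl'j
    rcases Fin.compl_pair_cases hij hik hil hjk hjl hkl hkl' hk'i hk'j hl'i hl'j with
      ⟨rfl, rfl⟩ | ⟨rfl, rfl⟩
    · exact exists_between_of_mul_neg hcross (hP i j hij).1 (hP i j hij).2 (hP i k' hik).1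
        (hP i l' hil).1 hneg
    · exact exists_between_of_mul_neg hcross (hP i j hij).1 (hP i j hij).2 (hP i k' hil).1
        (hP i l' hik).1 (by rwa [mul_comm])

theorem normalCross_mul_pos_iff (ha : ∑ m, a m = 0) (hb : ∑ m, b m = 0) (hc : ∑ m, c m = 0)
    {i j k l : Fin 4} (hij : i ≠ j) (hik : i ≠ k) (hil : i ≠ l) (hjk : j ≠ k) (hjl : j ≠ l)
    (hkl : k ≠ l) (hcross : normalCross a b i k ≠ 0) {p q : F × F}
    (hpi : arrLine a b c i p = 0) (hpk : arrLine a b c k p = 0) (hpj : arrLine a b c j p ≠ 0)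
    (hqi : arrLine a b c i q = 0) (hql : arrLine a b c l q = 0) :
    0 < normalCross a b i k * normalCross a b i l ↔ arrLine a b c j p * arrLine a b c j q < 0 := by
  have hsum := fun f : Fin 4 → F => Fin.sum_univ_four_of_ne f hij hik hil hjk hjl hkl
  have hdet := lineDet_eq_neg (l := l) ((hsum a).symm.trans ha) ((hsum b).symm.trans hb)
    ((hsum c).symm.trans hc)
  have hp := normalCross_mul_arrLine (j := j) hpi hpk
  have hq := normalCross_mul_arrLine (j := j) hqi hql
  have hne : lineDet a b c i j k ≠ 0 := hp ▸ mul_ne_zero hcross hpj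
  refine pos_iff_neg_of_mul_neg ?_
  calc normalCross a b i k * normalCross a b i l * (arrLine a b c j p * arrLine a b c j q)
      _ = -lineDet a b c i j k ^ 2 := by
        linear_combination normalCross a b i l * arrLine a b c j q * hp +
          lineDet a b c i j k * hq + lineDet a b c i j k * hdet
      _ < 0 := neg_neg_of_pos (pow_two_pos_of_ne_zero hne)

/-- Rescaling the four lines by the signed `3 × 3` minors of their coefficient matrix makes the
coefficient vectors sum to zero (Laplace expansion of a `4 × 4` determinant with a repeated
column); the minors are nonzero because no three lines are concurrent. -/
theorem exists_weights_sum_eq_zero (hpar : ∀ i j : Fin 4, i ≠ j → a i * b j ≠ a j * b i)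
    (hconc : ∀ i j k : Fin 4, i ≠ j → j ≠ k → i ≠ k →
      ¬ ∃ p : F × F, arrLine a b c i p = 0 ∧ arrLine a b c j p = 0 ∧ arrLine a b c k p = 0)
    {P : Fin 4 → Fin 4 → F × F}
    (hP : ∀ i j : Fin 4, i ≠ j → arrLine a b c i (P i j) = 0 ∧ arrLine a b c j (P i j) = 0) :
    ∃ μ : Fin 4 → F, (∀ m, μ m ≠ 0) ∧
      ∑ m, (μ * a) m = 0 ∧ ∑ m, (μ * b) m = 0 ∧ ∑ m, (μ * c) m = 0 := by
  have hdet : ∀ i j k, i ≠ j → j ≠ k → i ≠ k → lineDet a b c i j k ≠ 0 := by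
    intro i j k hij hjk hik
    rw [← normalCross_mul_arrLine (hP i k hik).1 (hP i k hik).2]
    exact mul_ne_zero (sub_ne_zero.2 (hpar i k hik))
      fun h => hconc i j k hij hjk hik ⟨P i k, (hP i k hik).1, h, (hP i k hik).2⟩
  refine ⟨![lineDet a b c 1 2 3, -lineDet a b c 0 2 3, lineDet a b c 0 1 3, -lineDet a b c 0 1 2],
    fun m => ?_, ?_, ?_, ?_⟩
  · fin_cases m <;> simp [hdet]
  all_goals
    simp [Fin.sum_univ_four, lineDet, Matrix.det_fin_three]
    ring

theorem midOnLine_iff_normalCross_mul_pos (hpar : ∀ i j : Fin 4, i ≠ j → a i * b j ≠ a j * b i)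
    (hconc : ∀ i j k : Fin 4, i ≠ j → j ≠ k → i ≠ k →
      ¬ ∃ p : F × F, arrLine a b c i p = 0 ∧ arrLine a b c j p = 0 ∧ arrLine a b c k p = 0)
    {P : Fin 4 → Fin 4 → F × F}
    (hP : ∀ i j : Fin 4, i ≠ j → arrLine a b c i (P i j) = 0 ∧ arrLine a b c j (P i j) = 0)
    {μ : Fin 4 → F} (hμ : ∀ m, μ m ≠ 0) (ha : ∑ m, (μ * a) m = 0) (hb : ∑ m, (μ * b) m = 0)
    (hc : ∑ m, (μ * c) m = 0) {i j k l : Fin 4} (hij : i ≠ j) (hik : i ≠ k) (hil : i ≠ l)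
    (hjk : j ≠ k) (hjl : j ≠ l) (hkl : k ≠ l) :
    midOnLine P i j ↔ 0 < normalCross (μ * a) (μ * b) i k * normalCross (μ * a) (μ * b) i l := by
  have hscale : ∀ m p, arrLine a b c m p = 0 → arrLine (μ * a) (μ * b) (μ * c) m p = 0 :=
    fun m p h => by rw [arrLine_mul, h, mul_zero]
  have hoff : arrLine a b c j (P i k) ≠ 0 := fun h =>
    hconc i k j hik hjk.symm hij ⟨P i k, (hP i k hik).1, (hP i k hik).2, h⟩
  rw [midOnLine_iff_mul_neg hpar hconc hP hij hik hil hjk hjl hkl,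
    normalCross_mul_pos_iff ha hb hc hij hik hil hjk hjl hkl
      (normalCross_mul_ne_zero hμ (hpar i k hik))
      (hscale _ _ (hP i k hik).1) (hscale _ _ (hP i k hik).2)
      (by rw [arrLine_mul]; exact mul_ne_zero (hμ j) hoff)
      (hscale _ _ (hP i l hil).1) (hscale _ _ (hP i l hil).2),
    arrLine_mul, arrLine_mul, mul_mul_mul_comm]
  have hμj : 0 < μ j * μ j := mul_self_pos.2 (hμ j)
  constructor <;> intro h <;> nlinarith

end Quadrilateral

theorem quadrilateral_unique_nook_point_general
    {F : Type*} [Field F] [LinearOrder F] [IsStrictOrderedRing F]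
    (a b c : Fin 4 → F)
    (hpar : ∀ i j : Fin 4, i ≠ j → a i * b j ≠ a j * b i)
    (hconc : ∀ i j k : Fin 4, i ≠ j → j ≠ k → i ≠ k →
      ¬ ∃ p : F × F, arrLine a b c i p = 0 ∧ arrLine a b c j p = 0 ∧ arrLine a b c k p = 0)
    (P : Fin 4 → Fin 4 → F × F)
    (hP : ∀ i j : Fin 4, i ≠ j →
      arrLine a b c i (P i j) = 0 ∧ arrLine a b c j (P i j) = 0) :
    ∃ i j : Fin 4, i ≠ j ∧ midOnLine P i j ∧ midOnLine P j i ∧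
      ∀ i' j' : Fin 4, i' ≠ j' → midOnLine P i' j' → midOnLine P j' i' →
        (i' = i ∧ j' = j) ∨ (i' = j ∧ j' = i) := by
  obtain ⟨μ, hμ, ha, hb, hc⟩ := exists_weights_sum_eq_zero hpar hconc hP
  have hcross : ∀ i j, i ≠ j → normalCross (μ * a) (μ * b) i j ≠ 0 :=
    fun i j hij => normalCross_mul_ne_zero hμ (hpar i j hij)
  refine (existsUniqueMutualPair_sign _ (fun i j => normalCross_swap _ _ i j) hcross
    (sum_normalCross_eq_zero _ _ ha hb)).congr fun i j hij => ?_
  obtain ⟨k, l, hik, hil, hjk, hjl, hkl⟩ := Fin.exists_compl_pair i j hij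
  rw [isOddOneOut_iff hij hik hil hjk hjl hkl, decide_eq_decide,
    ← mul_pos_iff_of_ne_zero (hcross i k hik) (hcross i l hil),
    midOnLine_iff_normalCross_mul_pos hpar hconc hP hμ ha hb hc hij hik hil hjk hjl hkl]

/-- Every quadrilateral structure (four lines in general position) has a unique nook
point: exactly one pair `{i, j}` such that `P i j = L i ∩ L j` lies strictly between the
other two intersection points on `L i` and also on `L j`. -/
theorem quadrilateral_unique_nook_point
    {F : Type*} [Field F] [LinearOrder F] [IsStrictOrderedRing F]
    (a b c : Fin 4 → F)
    (hnd : ∀ i : Fin 4, (a i, b i) ≠ (0, 0))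
    (hpar : ∀ i j : Fin 4, i ≠ j → a i * b j ≠ a j * b i)
    (hconc : ∀ i j k : Fin 4, i ≠ j → j ≠ k → i ≠ k →
      ¬ ∃ p : F × F, arrLine a b c i p = 0 ∧ arrLine a b c j p = 0 ∧ arrLine a b c k p = 0)
    (P : Fin 4 → Fin 4 → F × F)
    (hP : ∀ i j : Fin 4, i ≠ j →
      arrLine a b c i (P i j) = 0 ∧ arrLine a b c j (P i j) = 0) :
    ∃ i j : Fin 4, i ≠ j ∧ midOnLine P i j ∧ midOnLine P j i ∧
      ∀ i' j' : Fin 4, i' ≠ j' → midOnLine P i' j' → midOnLine P j' i' →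
        (i' = i ∧ j' = j) ∨ (i' = j ∧ j' = i) :=
  quadrilateral_unique_nook_point_general a b c hpar hconc P hP
end

section
/- Let n ≥ 1. For an enumeration a_1, …, a_n of {1, …, n} with a_1 = 1, call a partition of {1, …, n} into nonempty blocks admissible if every block is a set of consecutive integers and, for each block, its elements occur along the sequence a_1, …, a_n in increasing order; say the enumeration is 2-standard consecutive if the minimum number of blocks of an admissible partition equals 2. Then the number of 2-standard consecutive enumerations of {1, …, n} starting with 1 is exactly 2^{n−1} − n. (The set T_n of 2-standard consecutive n-cycles in S_n satisfies #(T_n) = 2^{n−1} − n.) -/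
/-- `P` is an admissible partition for the enumeration `a` of `Fin n`: its blocks are
nonempty, every element lies in exactly one block, every block is a set of consecutive
integers (an order interval), and the elements of each block occur along the sequence
`a 0, a 1, …, a (n-1)` in increasing order. -/
def AdmissiblePartition (n : ℕ) (a : Fin n → Fin n) (P : Finset (Finset (Fin n))) : Prop :=
  (∀ B ∈ P, B.Nonempty) ∧
  (∀ x : Fin n, ∃! B : Finset (Fin n), B ∈ P ∧ x ∈ B) ∧
  (∀ B ∈ P, ∀ u v w : Fin n, u ∈ B → w ∈ B → u ≤ v → v ≤ w → v ∈ B) ∧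
  (∀ B ∈ P, ∀ s t : Fin n, a s ∈ B → a t ∈ B → a s < a t → s < t)

/-!
Write `σ = a⁻¹`, so that `σ x` is the position of `x` in the cycle; `i` is a descent of `σ`
when `i + 1` occurs before `i`. A block of an admissible partition is an interval on which `σ`
is increasing, so it never contains both `i` and `i + 1` for a descent `i`: every admissible
partition has more blocks than `σ` has descents, and when there is at most one descent, cutting
there gives a partition with exactly one block more. So the minimum is `2` iff `σ` has exactly
one descent `c`. Such a `σ` lists `S = σ {0, …, c}` increasingly and then the complement of `S`,
i.e. it is the stable sort of `Fin n` by the key `x ∉ S`. Conversely this sort has exactly one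
descent iff `S` is not an initial segment, and it fixes `0` iff `0 ∈ S`. There are
`2 ^ (n - 1) - n` such sets `S`.
-/

open Finset Order Function Equiv

variable {n : ℕ}

/-- `succ ⊤ = ⊤` in `Fin n`, so the last index is never a descent and needs no guard. -/
def descents {α : Type*} [LinearOrder α] (f : Fin n → α) : Finset (Fin n) :=
  {i | f (succ i) < f i}

section Descents

variable {α : Type*} [LinearOrder α] {f : Fin n → α} {i c : Fin n}

lemma mem_descents : i ∈ descents f ↔ f (succ i) < f i := by
  simp [descents]

lemma lt_succ_of_mem_descents (h : i ∈ descents f) : i < succ i :=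
  lt_succ_of_not_isMax fun hi => by
    rw [mem_descents, succ_eq_iff_isMax.2 hi] at h
    exact lt_irrefl _ h

lemma strictMonoOn_of_forall_notMem_descents (hf : Injective f) {s : Set (Fin n)}
    (hs : s.OrdConnected) (h : ∀ i ∈ s, succ i ∈ s → i ∉ descents f) : StrictMonoOn f s :=
  strictMonoOn_of_lt_succ hs fun i hi his hsi =>
    (not_lt.1 (mt mem_descents.2 (h i his hsi))).lt_of_ne (hf.ne (lt_succ_of_not_isMax hi).ne)

lemma strictMonoOn_Iic_of_descents_eq (hf : Injective f) (h : descents f = {c}) :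
    StrictMonoOn f (Set.Iic c) :=
  strictMonoOn_of_forall_notMem_descents hf Set.ordConnected_Iic fun i _ hi => by
    simp only [h, mem_singleton, Set.mem_Iic] at hi ⊢
    rintro rfl
    exact (lt_succ_of_mem_descents (h ▸ mem_singleton_self i)).not_ge hi

lemma strictMonoOn_Ioi_of_descents_eq (hf : Injective f) (h : descents f = {c}) :
    StrictMonoOn f (Set.Ioi c) :=
  strictMonoOn_of_forall_notMem_descents hf Set.ordConnected_Ioi fun i hi _ => by
    simp only [h, mem_singleton, Set.mem_Ioi] at hi ⊢
    exact hi.ne'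

end Descents

lemma strictMonoOn_iff_forall_symm {α β : Type*} [Preorder α] [Preorder β] (e : α ≃ β)
    (s : Set α) :
    StrictMonoOn e s ↔ ∀ x y, e.symm x ∈ s → e.symm y ∈ s → e.symm x < e.symm y → x < y := by
  refine ⟨fun h x y hx hy hxy => ?_, fun h x hx y hy hxy => h (e x) (e y) ?_ ?_ ?_⟩
  · simpa using h hx hy hxy
  all_goals simpa

lemma admissiblePartition_symm_iff (σ : Perm (Fin n)) (P : Finset (Finset (Fin n))) :
    AdmissiblePartition n σ.symm P ↔ (∀ B ∈ P, B.Nonempty) ∧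
      (∀ x, ∃! B, B ∈ P ∧ x ∈ B) ∧ (∀ B ∈ P, (B : Set (Fin n)).OrdConnected) ∧
      ∀ B ∈ P, StrictMonoOn σ B := by
  simp only [AdmissiblePartition, strictMonoOn_iff_forall_symm, Set.ordConnected_def,
    Set.subset_def, Set.mem_Icc, mem_coe]
  grind

section Partitions

variable {σ : Perm (Fin n)} {P : Finset (Finset (Fin n))}

/-- The blocks of the descents and of `⊤` are pairwise distinct. -/
theorem card_descents_lt_card [NeZero n] (hP : AdmissiblePartition n σ.symm P) :
    #(descents σ) < #P := by
  obtain ⟨-, hcover, hconn, hmono⟩ := (admissiblePartition_symm_iff σ P).1 hP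
  choose blk hblk hmem using fun x => (hcover x).exists
  have hsep : ∀ i ∈ insert ⊤ (descents σ), ∀ j, i < j → blk i ≠ blk j := by
    intro i hi j hij hij'
    have hi : i ∈ descents σ := (mem_insert.1 hi).resolve_left (ne_top_of_lt hij)
    have hsucc : succ i ∈ blk i :=
      (hconn _ (hblk i)).out (hmem i) (hij' ▸ hmem j) ⟨le_succ i, succ_le_of_lt hij⟩
    exact (mem_descents.1 hi).not_gt
      (hmono _ (hblk i) (hmem i) hsucc (lt_succ_of_mem_descents hi))
  have htop : ⊤ ∉ descents σ := fun h => (lt_succ_of_mem_descents h).not_ge le_top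
  calc #(descents σ) < #(insert ⊤ (descents σ)) := card_lt_card (ssubset_insert htop)
    _ ≤ #P := card_le_card_of_injOn blk (fun x _ => hblk x) fun x hx y hy hxy => by
        by_contra hne
        rcases lt_or_gt_of_ne hne with h | h
        exacts [hsep x hx y h hxy, hsep y hy x h hxy.symm]

lemma admissiblePartition_univ [NeZero n] (h : descents σ = ∅) :
    AdmissiblePartition n σ.symm {univ} := by
  refine (admissiblePartition_symm_iff σ _).2 ⟨by simp, fun x => ⟨univ, by simp, by simp⟩,
    by simpa using Set.ordConnected_univ, ?_⟩
  simpa using strictMonoOn_of_forall_notMem_descents σ.injective Set.ordConnected_univ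
    (by simp [h])

lemma admissiblePartition_Iic_Ioi {c : Fin n} (h : descents σ = {c}) :
    AdmissiblePartition n σ.symm {Iic c, Ioi c} := by
  have hc : c < succ c := lt_succ_of_mem_descents (h ▸ mem_singleton_self c)
  refine (admissiblePartition_symm_iff σ _).2 ⟨?_, fun x => ?_, ?_, ?_⟩
  · simp only [mem_insert, mem_singleton, forall_eq_or_imp, forall_eq]
    exact ⟨⟨c, mem_Iic.2 le_rfl⟩, ⟨succ c, mem_Ioi.2 hc⟩⟩
  · rcases le_or_gt x c with hx | hx
    · exact ⟨Iic c, by simpa using hx, by simp [hx.not_gt]⟩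
    · exact ⟨Ioi c, by simpa using hx, by simp [hx.not_ge]⟩
  · simpa using ⟨Set.ordConnected_Iic, Set.ordConnected_Ioi⟩
  · simpa using ⟨strictMonoOn_Iic_of_descents_eq σ.injective h,
      strictMonoOn_Ioi_of_descents_eq σ.injective h⟩

end Partitions

theorem isLeast_two_iff_card_descents [NeZero n] (σ : Perm (Fin n)) :
    IsLeast {k | ∃ P, AdmissiblePartition n σ.symm P ∧ #P = k} 2 ↔ #(descents σ) = 1 := by
  constructor
  · rintro ⟨⟨P, hP, hP2⟩, hleast⟩
    have hlt := hP2 ▸ card_descents_lt_card hP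
    refine (Nat.lt_succ_iff.1 hlt).antisymm (Nat.one_le_iff_ne_zero.2 fun h0 => ?_)
    have := hleast ⟨_, admissiblePartition_univ (card_eq_zero.1 h0), card_singleton _⟩
    omega
  · intro h1
    obtain ⟨c, hc⟩ := card_eq_one.1 h1
    refine ⟨⟨_, admissiblePartition_Iic_Ioi hc,
      card_pair (ne_of_mem_of_not_mem' (mem_Iic.2 le_rfl) (by simp))⟩, ?_⟩
    rintro k ⟨P, hP, rfl⟩
    have := card_descents_lt_card hP
    omega

lemma Finset.Iic_injective {α : Type*} [PartialOrder α] [LocallyFiniteOrderBot α] :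
    Injective (Iic : α → Finset α) := fun _ _ h =>
  le_antisymm (Iic_subset_Iic.1 h.le) (Iic_subset_Iic.1 h.ge)

def sortMemFirst (S : Finset (Fin n)) : Perm (Fin n) :=
  Tuple.sort fun x => decide (x ∉ S)

section SortMemFirst

variable {S : Finset (Fin n)} {i j c : Fin n}

lemma sortMemFirst_mem_of_le (hij : i ≤ j) (hj : sortMemFirst S j ∈ S) :
    sortMemFirst S i ∈ S := by
  have := Tuple.monotone_sort (fun x => decide (x ∉ S)) hij
  simp_all [sortMemFirst, Bool.le_iff_imp]

lemma sortMemFirst_lt (hij : i < j) (h : sortMemFirst S i ∈ S ↔ sortMemFirst S j ∈ S) :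
    sortMemFirst S i < sortMemFirst S j :=
  (Tuple.eq_sort_iff.1 rfl).2 i j hij (by simpa [sortMemFirst] using h)

lemma mem_and_notMem_of_mem_descents (hc : c ∈ descents (sortMemFirst S)) :
    sortMemFirst S c ∈ S ∧ sortMemFirst S (succ c) ∉ S := by
  have := mt (sortMemFirst_lt (lt_succ_of_mem_descents hc)) (mem_descents.1 hc).not_gt
  have := sortMemFirst_mem_of_le (S := S) (le_succ c)
  tauto

lemma map_Iic_of_mem_descents (hc : c ∈ descents (sortMemFirst S)) :
    (Iic c).map (sortMemFirst S).toEmbedding = S := by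
  obtain ⟨hcS, hsucc⟩ := mem_and_notMem_of_mem_descents hc
  ext x
  obtain ⟨i, rfl⟩ := (sortMemFirst S).surjective x
  simp only [mem_map_equiv, symm_apply_apply, mem_Iic]
  refine ⟨fun hi => sortMemFirst_mem_of_le hi hcS, fun hi => ?_⟩
  by_contra! hci
  exact hsucc (sortMemFirst_mem_of_le (succ_le_of_lt hci) hi)

lemma descents_sortMemFirst_nonempty (hS : ¬IsLowerSet (S : Set (Fin n))) :
    (descents (sortMemFirst S)).Nonempty := by
  refine nonempty_iff_ne_empty.2 fun h => hS fun x y hyx hx => ?_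
  have hmono : StrictMono (sortMemFirst S) := by
    simpa using strictMonoOn_of_forall_notMem_descents (sortMemFirst S).injective
      Set.ordConnected_univ (by simp [h])
  obtain ⟨i, rfl⟩ := (sortMemFirst S).surjective x
  obtain ⟨j, rfl⟩ := (sortMemFirst S).surjective y
  exact sortMemFirst_mem_of_le (hmono.le_iff_le.1 hyx) hx

lemma card_descents_sortMemFirst (hS : ¬IsLowerSet (S : Set (Fin n))) :
    #(descents (sortMemFirst S)) = 1 := by
  obtain ⟨c, hc⟩ := descents_sortMemFirst_nonempty hS
  refine card_eq_one.2 ⟨c, eq_singleton_iff_unique_mem.2 ⟨hc, fun d hd => ?_⟩⟩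
  exact Iic_injective (map_injective _ ((map_Iic_of_mem_descents hd).trans
    (map_Iic_of_mem_descents hc).symm))

lemma sortMemFirst_zero [NeZero n] (hS : 0 ∈ S) : sortMemFirst S 0 = 0 := by
  obtain ⟨i, hi⟩ := (sortMemFirst S).surjective 0
  rcases (Fin.zero_le i).eq_or_lt with rfl | hpos
  · exact hi
  · have := sortMemFirst_lt hpos
      ⟨fun _ => hi ▸ hS, fun _ => sortMemFirst_mem_of_le hpos.le (hi ▸ hS)⟩
    exact absurd (hi ▸ this) (Fin.not_lt_zero _)

lemma eq_sortMemFirst_map_Iic {σ : Perm (Fin n)} (h : descents σ = {c}) :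
    σ = sortMemFirst ((Iic c).map σ.toEmbedding) := by
  refine Tuple.eq_sort_iff.2 ⟨fun i j hij => ?_, fun i j hij hσ => ?_⟩
  · simp only [comp_apply, mem_map_equiv, symm_apply_apply, mem_Iic, Bool.le_iff_imp,
      decide_eq_true_eq]
    exact fun hi hj => hi (hij.trans hj)
  · simp only [mem_map_equiv, symm_apply_apply, mem_Iic, decide_eq_decide, not_iff_not] at hσ
    rcases le_or_gt j c with hj | hj
    · exact strictMonoOn_Iic_of_descents_eq σ.injective h (hσ.2 hj) hj hij
    · exact strictMonoOn_Ioi_of_descents_eq σ.injective h (lt_of_not_ge (mt hσ.1 hj.not_ge))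
        hj hij

end SortMemFirst

theorem card_perm_fixing_zero_one_descent [NeZero n] :
    Nat.card {σ : Perm (Fin n) // σ 0 = 0 ∧ #(descents σ) = 1} =
      Nat.card {S : Finset (Fin n) // 0 ∈ S ∧ ¬IsLowerSet (S : Set (Fin n))} := by
  refine (Nat.card_eq_of_bijective (fun S => ⟨sortMemFirst S.1, sortMemFirst_zero S.2.1,
    card_descents_sortMemFirst S.2.2⟩) ⟨fun S T hST => ?_, fun σ => ?_⟩).symm
  · obtain ⟨c, hc⟩ := descents_sortMemFirst_nonempty S.2.2
    have hST : sortMemFirst S.1 = sortMemFirst T.1 := congrArg Subtype.val hST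
    refine Subtype.ext ?_
    rw [← map_Iic_of_mem_descents hc, hST]
    exact map_Iic_of_mem_descents (hST ▸ hc)
  · obtain ⟨c, hc⟩ := card_eq_one.1 σ.2.2
    have hcmem : c ∈ descents σ.1 := hc ▸ mem_singleton_self c
    refine ⟨⟨(Iic c).map σ.1.toEmbedding, ?_, fun hlow => ?_⟩,
      Subtype.ext (eq_sortMemFirst_map_Iic hc).symm⟩
    · rw [mem_map_equiv, mem_Iic, σ.1.symm_apply_eq.2 σ.2.1.symm]
      exact Fin.zero_le c
    · have hsucc := hlow (mem_descents.1 hcmem).le (by simp)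
      rw [mem_coe, mem_map_equiv, symm_apply_apply, mem_Iic] at hsucc
      exact (lt_succ_of_mem_descents hcmem).not_ge hsucc

lemma card_filter_mem_eq {α : Type*} [Fintype α] [DecidableEq α] (a : α) :
    #{S : Finset α | a ∈ S} = 2 ^ (Fintype.card α - 1) :=
  calc #{S : Finset α | a ∈ S} = #(univ.erase a).powerset :=
        card_nbij' (·.erase a) (insert a) (fun S _ => by simp)
          (fun T _ => by simp) (fun S hS => insert_erase (mem_filter.1 hS).2)
          (fun T hT => erase_insert fun h => by simpa using mem_powerset.1 hT h)
    _ = 2 ^ (Fintype.card α - 1) := by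
        rw [card_powerset, card_erase_of_mem (mem_univ a), card_univ]

open Classical in
lemma filter_zero_mem_isLowerSet_eq [NeZero n] :
    ({S | 0 ∈ S ∧ IsLowerSet (S : Set (Fin n))} : Finset (Finset (Fin n))) = univ.image Iic := by
  ext S
  simp only [mem_filter, mem_univ, true_and, mem_image]
  constructor
  · rintro ⟨h0, hS⟩
    exact ⟨S.max' ⟨0, h0⟩, ext fun x => ⟨fun hx => hS (mem_Iic.1 hx) (S.max'_mem _),
      fun hx => mem_Iic.2 (S.le_max' x hx)⟩⟩
  · rintro ⟨c, rfl⟩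
    exact ⟨mem_Iic.2 (Fin.zero_le c), coe_Iic c ▸ isLowerSet_Iic c⟩

open Classical in
lemma card_zero_mem_not_isLowerSet [NeZero n] :
    Nat.card {S : Finset (Fin n) // 0 ∈ S ∧ ¬IsLowerSet (S : Set (Fin n))} = 2 ^ (n - 1) - n := by
  have hall := card_filter_mem_eq (0 : Fin n)
  rw [Fintype.card_fin] at hall
  have hlower : #({S | 0 ∈ S ∧ IsLowerSet (S : Set (Fin n))} : Finset (Finset (Fin n))) = n := by
    rw [filter_zero_mem_isLowerSet_eq, card_image_of_injective _ Iic_injective, card_univ,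
      Fintype.card_fin]
  have hsplit := card_filter_add_card_filter_not (s := {S : Finset (Fin n) | 0 ∈ S})
    (fun S => IsLowerSet (S : Set (Fin n)))
  simp only [filter_filter] at hsplit
  rw [Nat.card_eq_fintype_card, Fintype.card_subtype]
  omega

theorem card_enumerations_eq_card_perm [NeZero n] :
    Nat.card {a : Fin n → Fin n // Bijective a ∧ a 0 = 0 ∧
        IsLeast {k | ∃ P, AdmissiblePartition n a P ∧ #P = k} 2} =
      Nat.card {σ : Perm (Fin n) // σ 0 = 0 ∧ #(descents σ) = 1} :=
  Nat.card_congr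
    { toFun a := ⟨(ofBijective a.1 a.2.1).symm,
        (ofBijective a.1 a.2.1).symm_apply_eq.2 a.2.2.1.symm,
        (isLeast_two_iff_card_descents _).1 a.2.2.2⟩
      invFun σ := ⟨σ.1.symm, σ.1.symm.bijective, σ.1.symm_apply_eq.2 σ.2.1.symm,
        (isLeast_two_iff_card_descents _).2 σ.2.2⟩
      left_inv _ := rfl
      right_inv σ := Subtype.ext <| Equiv.ext fun x =>
        (ofBijective _ _).symm_apply_eq.2 (σ.1.symm_apply_apply x).symm }

/-- The number of `2`-standard consecutive `n`-cycles is `2^(n-1) - n`: the number of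
enumerations `a` of `{0, …, n-1}` starting at `0` for which the minimum number of blocks
of an admissible partition equals `2` is exactly `2^(n-1) - n`. -/
theorem card_two_standard_consecutive_cycles (n : ℕ) (hn : 1 ≤ n) :
    Nat.card {a : Fin n → Fin n // Function.Bijective a ∧ a ⟨0, hn⟩ = ⟨0, hn⟩ ∧
        IsLeast {k : ℕ | ∃ P : Finset (Finset (Fin n)),
          AdmissiblePartition n a P ∧ P.card = k} 2}
      = 2 ^ (n - 1) - n := by
  have : NeZero n := ⟨by omega⟩
  rw [← card_zero_mem_not_isLowerSet, ← card_perm_fixing_zero_one_descent]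
  exact card_enumerations_eq_card_perm
end
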